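/- arXiv:1803.01499 — 9 statements merged into one kernel-verified Lean document; each statement's English description precedes it below -/
import Mathlib

section
/- Let Z be a Bernoulli random variable with mean μ > 0, and let Z_1, Z_2, ... be i.i.d. copies of Z. Let M be a stopping time for this sequence such that Z_1 + ... + Z_M = ⌈Υ₁⌉ where Υ₁ = 1 + (1+ε)·4(e−2)ln(2/δ)/ε². Then Pr[(Z_1+...+Z_M)/M ≤ (1+ε)μ] ≥ 1 − δ/2 and Pr[(Z_1+...+Z_M)/M ≥ (⌈Υ₁⌉/(⌈Υ₁⌉+1))·(1−ε)μ] ≥ 1 − δ/2. -/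
/-!
Write `K = ⌈Υ₁⌉` and `Sₙ = Z₀ + ⋯ + Zₙ₋₁`, so that `S_M = K`. The argument is pathwise: if
`K / M > (1 + ε) μ` then `M ≤ n₁ := ⌊K / ((1 + ε) μ)⌋`, hence `S_{n₁} ≥ K` by monotonicity; if
`K / M < (1 - ε) μ` then `M ≥ n₂ := ⌈K / ((1 - ε) μ)⌉`, hence `S_{n₂} ≤ K`. Both events concern a
fixed number of independent Bernoulli variables, whose sum has moment generating function at most
`exp (n μ (eᵗ - 1))`. Chernoff's method with `eᵗ ≤ 1 + t + (e - 2) t²` (for `|t| ≤ 1`, at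
`t = ε / (2 (e - 2))`) and `e^{-ε} ≤ 1 - ε + ε² / 2` bounds them by
`exp (-K ε² / (4 (e - 2) (1 + ε)))` and `exp (-K ε² / 2)`, and `K ≥ 4 (e - 2) (1 + ε) ln (2/δ) / ε²`
makes both at most `δ / 2`.
-/

open MeasureTheory ProbabilityTheory Finset Real
open scoped Nat

namespace Real

theorem exp_le_one_add_add_mul_sq {t : ℝ} (ht : |t| ≤ 1) :
    exp t ≤ 1 + t + (exp 1 - 2) * t ^ 2 := by
  have hseries (x : ℝ) :
      HasSum (fun n ↦ x ^ (n + 2) / (n + 2)!) (exp x - (1 + x)) := by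
    have := (hasSum_nat_add_iff' 2).2 (NormedSpace.expSeries_div_hasSum_exp x)
    simpa [← exp_eq_exp_ℝ, sum_range_succ, add_comm] using this
  have hterm (n : ℕ) : t ^ (n + 2) / (n + 2)! ≤ t ^ 2 * (1 ^ (n + 2) / (n + 2)!) := by
    rw [one_pow, mul_one_div, pow_add]
    gcongr
    refine mul_le_of_le_one_left (sq_nonneg t) ?_
    calc t ^ n ≤ |t| ^ n := (le_abs_self _).trans (abs_pow t n).le
      _ ≤ 1 := pow_le_one₀ (abs_nonneg t) ht
  have := hasSum_le hterm (hseries t) ((hseries 1).mul_left (t ^ 2))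
  linarith

theorem exp_neg_le_one_sub_add_sq_div_two {x : ℝ} (hx : 0 ≤ x) :
    exp (-x) ≤ 1 - x + x ^ 2 / 2 := by
  let f : ℝ → ℝ := fun y ↦ 1 - y + y ^ 2 / 2 - exp (-y)
  have hf (y : ℝ) : HasDerivAt f (y - 1 + exp (-y)) y := by
    have := (((hasDerivAt_id y).const_sub 1).add ((hasDerivAt_pow 2 y).div_const 2)).sub
      (hasDerivAt_neg y).exp
    exact this.congr_deriv (by ring)
  have hmono : Monotone f := monotone_of_deriv_nonneg (fun y ↦ (hf y).differentiableAt)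
    fun y ↦ by rw [(hf y).deriv]; linarith [add_one_le_exp (-y)]
  have := hmono hx
  simp only [f, neg_zero, exp_zero] at this
  linarith

end Real

theorem nonneg_of_eq_zero_or_eq_one {x : ℝ} (h : x = 0 ∨ x = 1) : 0 ≤ x := by
  rcases h with rfl | rfl <;> norm_num

theorem Monotone.apply_le_apply_floor_of_lt_div {S : ℕ → ℝ} (hS : Monotone S) {m : ℕ} {r : ℝ}
    (hr : 0 < r) (h : r < S m / m) : S m ≤ S ⌊S m / r⌋₊ := by
  have hm : (0 : ℝ) < m := by
    rcases Nat.eq_zero_or_pos m with rfl | hm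
    · simp only [Nat.cast_zero, div_zero] at h
      linarith
    · exact_mod_cast hm
  rw [lt_div_iff₀ hm] at h
  exact hS (Nat.le_floor (by rw [le_div_iff₀ hr]; linarith))

theorem Monotone.apply_ceil_le_apply_of_div_lt {S : ℕ → ℝ} (hS : Monotone S) {m : ℕ} {r : ℝ}
    (hr : 0 < r) (hm : 0 < m) (h : S m / m < r) : S ⌈S m / r⌉₊ ≤ S m := by
  rw [div_lt_iff₀ (by exact_mod_cast hm)] at h
  exact hS (Nat.ceil_le.2 (by rw [div_le_iff₀ hr]; linarith))

namespace ProbabilityTheory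

variable {Ω : Type*}

theorem exp_mul_eq_indicator_add_one {X : Ω → ℝ} (hval : ∀ ω, X ω = 0 ∨ X ω = 1) (t : ℝ) :
    (fun ω ↦ exp (t * X ω)) = fun ω ↦ {ω | X ω = 1}.indicator (fun _ ↦ exp t - 1) ω + 1 := by
  ext ω
  rcases hval ω with h | h <;> simp [h]

variable [MeasurableSpace Ω] {P : Measure Ω} [IsProbabilityMeasure P]

theorem ofReal_one_sub_le_of_measureReal_compl_le {s : Set Ω} {a : ℝ} (h : P.real sᶜ ≤ a) :
    ENNReal.ofReal (1 - a) ≤ P s := by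
  have hunion : 1 ≤ P.real s + P.real sᶜ := by
    simpa [Set.union_compl_self] using measureReal_union_le (μ := P) s sᶜ
  rw [← ofReal_measureReal]
  exact ENNReal.ofReal_le_ofReal (by linarith)

theorem integrable_exp_mul_of_forall_eq_zero_or_eq_one {X : Ω → ℝ} (hX : Measurable X)
    (hval : ∀ ω, X ω = 0 ∨ X ω = 1) (t : ℝ) : Integrable (fun ω ↦ exp (t * X ω)) P := by
  rw [exp_mul_eq_indicator_add_one hval]
  exact ((integrable_const _).indicator (hX (measurableSet_singleton 1))).add (integrable_const 1)

theorem mgf_of_forall_eq_zero_or_eq_one {X : Ω → ℝ} (hX : Measurable X)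
    (hval : ∀ ω, X ω = 0 ∨ X ω = 1) (t : ℝ) :
    mgf X P t = 1 + P.real {ω | X ω = 1} * (exp t - 1) := by
  have hs : MeasurableSet {ω | X ω = 1} := hX (measurableSet_singleton 1)
  rw [mgf, exp_mul_eq_indicator_add_one hval, integral_add ((integrable_const _).indicator hs)
    (integrable_const 1), integral_indicator_const _ hs]
  simp [add_comm]

section Chernoff

variable {ι : Type*} {X : ι → Ω → ℝ}

theorem iIndepFun.mgf_sum_le_of_forall_eq_zero_or_eq_one (hindep : iIndepFun X P)
    (hmeas : ∀ i, Measurable (X i)) (hval : ∀ i ω, X i ω = 0 ∨ X i ω = 1) (s : Finset ι)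
    (t : ℝ) : mgf (∑ i ∈ s, X i) P t ≤ exp ((∑ i ∈ s, P.real {ω | X i ω = 1}) * (exp t - 1)) := by
  rw [hindep.mgf_sum hmeas, sum_mul, exp_sum]
  refine prod_le_prod (fun i _ ↦ mgf_nonneg) fun i _ ↦ ?_
  rw [mgf_of_forall_eq_zero_or_eq_one (hmeas i) (hval i)]
  linarith [add_one_le_exp (P.real {ω | X i ω = 1} * (exp t - 1))]

theorem iIndepFun.measureReal_sum_ge_le_of_forall_eq_zero_or_eq_one (hindep : iIndepFun X P)
    (hmeas : ∀ i, Measurable (X i)) (hval : ∀ i ω, X i ω = 0 ∨ X i ω = 1) (s : Finset ι)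
    (a : ℝ) {t : ℝ} (ht : 0 ≤ t) :
    P.real {ω | a ≤ ∑ i ∈ s, X i ω}
      ≤ exp (-t * a + (∑ i ∈ s, P.real {ω | X i ω = 1}) * (exp t - 1)) := by
  have hint := hindep.integrable_exp_mul_sum hmeas (s := s)
    fun i _ ↦ integrable_exp_mul_of_forall_eq_zero_or_eq_one (hmeas i) (hval i) t
  calc P.real {ω | a ≤ ∑ i ∈ s, X i ω} ≤ exp (-t * a) * mgf (∑ i ∈ s, X i) P t := by
        simpa only [Finset.sum_apply] using measure_ge_le_exp_mul_mgf a ht hint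
    _ ≤ _ := by
        rw [exp_add]
        gcongr
        exact hindep.mgf_sum_le_of_forall_eq_zero_or_eq_one hmeas hval s t

theorem iIndepFun.measureReal_sum_le_le_of_forall_eq_zero_or_eq_one (hindep : iIndepFun X P)
    (hmeas : ∀ i, Measurable (X i)) (hval : ∀ i ω, X i ω = 0 ∨ X i ω = 1) (s : Finset ι)
    (a : ℝ) {t : ℝ} (ht : t ≤ 0) :
    P.real {ω | ∑ i ∈ s, X i ω ≤ a}
      ≤ exp (-t * a + (∑ i ∈ s, P.real {ω | X i ω = 1}) * (exp t - 1)) := by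
  have hint := hindep.integrable_exp_mul_sum hmeas (s := s)
    fun i _ ↦ integrable_exp_mul_of_forall_eq_zero_or_eq_one (hmeas i) (hval i) t
  calc P.real {ω | ∑ i ∈ s, X i ω ≤ a} ≤ exp (-t * a) * mgf (∑ i ∈ s, X i) P t := by
        simpa only [Finset.sum_apply] using measure_le_le_exp_mul_mgf a ht hint
    _ ≤ _ := by
        rw [exp_add]
        gcongr
        exact hindep.mgf_sum_le_of_forall_eq_zero_or_eq_one hmeas hval s t

theorem iIndepFun.measureReal_sum_ge_le_exp_of_one_add_mul_le (hindep : iIndepFun X P)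
    (hmeas : ∀ i, Measurable (X i)) (hval : ∀ i ω, X i ω = 0 ∨ X i ω = 1) (s : Finset ι)
    {ε K : ℝ} (hε0 : 0 ≤ ε) (hε1 : ε ≤ 1)
    (hK : (1 + ε) * ∑ i ∈ s, P.real {ω | X i ω = 1} ≤ K) :
    P.real {ω | K ≤ ∑ i ∈ s, X i ω} ≤ exp (-(K * ε ^ 2 / (4 * (exp 1 - 2) * (1 + ε)))) := by
  set m := ∑ i ∈ s, P.real {ω | X i ω = 1}
  have hc : 1 / 2 < exp 1 - 2 := by linarith [exp_one_gt_d9]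
  -- minimizes `-t * K + K / (1 + ε) * (t + (exp 1 - 2) * t ^ 2)`
  set t := ε / (2 * (exp 1 - 2))
  have ht0 : 0 ≤ t := by positivity
  have ht1 : |t| ≤ 1 := by
    rw [abs_of_nonneg ht0, div_le_one (by positivity)]
    linarith
  have hm : m ≤ K / (1 + ε) := by rw [le_div_iff₀ (by positivity)]; linarith
  have hm0 : 0 ≤ m := sum_nonneg fun i _ ↦ measureReal_nonneg
  refine (hindep.measureReal_sum_ge_le_of_forall_eq_zero_or_eq_one hmeas hval s K ht0).trans
    (exp_le_exp.2 ?_)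
  calc -t * K + m * (exp t - 1) ≤ -t * K + K / (1 + ε) * (t + (exp 1 - 2) * t ^ 2) := by
        have := exp_le_one_add_add_mul_sq ht1
        gcongr
        · linarith [add_one_le_exp t]
        · exact hm0.trans hm
        · linarith
    _ = -(K * ε ^ 2 / (4 * (exp 1 - 2) * (1 + ε))) := by
        simp only [t]
        field_simp
        ring

theorem iIndepFun.measureReal_sum_le_le_exp_of_le_one_sub_mul (hindep : iIndepFun X P)
    (hmeas : ∀ i, Measurable (X i)) (hval : ∀ i ω, X i ω = 0 ∨ X i ω = 1) (s : Finset ι)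
    {ε K : ℝ} (hε0 : 0 ≤ ε)
    (hK : K ≤ (1 - ε) * ∑ i ∈ s, P.real {ω | X i ω = 1}) :
    P.real {ω | ∑ i ∈ s, X i ω ≤ K} ≤ exp (-(K * ε ^ 2 / 2)) := by
  set m := ∑ i ∈ s, P.real {ω | X i ω = 1}
  have hm0 : 0 ≤ m := sum_nonneg fun i _ ↦ measureReal_nonneg
  refine (hindep.measureReal_sum_le_le_of_forall_eq_zero_or_eq_one hmeas hval s K
    (neg_nonpos.2 hε0)).trans (exp_le_exp.2 ?_)
  have hexp := exp_neg_le_one_sub_add_sq_div_two hε0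
  have hKm : K * (1 + ε / 2) ≤ m * (1 - ε / 2) := by
    nlinarith [mul_le_mul_of_nonneg_right hK (by linarith : (0 : ℝ) ≤ 1 + ε / 2)]
  nlinarith [mul_le_mul_of_nonneg_left hKm hε0, mul_le_mul_of_nonneg_left hexp hm0]

end Chernoff

section StoppingRule

variable {Z : ℕ → Ω → ℝ} {μ ε K : ℝ} {M : Ω → ℕ}

theorem ofReal_one_sub_exp_le_measure_mean_le (hindep : iIndepFun Z P)
    (hmeas : ∀ i, Measurable (Z i)) (hval : ∀ i ω, Z i ω = 0 ∨ Z i ω = 1)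
    (hp : ∀ i, P.real {ω | Z i ω = 1} = μ) (hμ : 0 < μ) (hε0 : 0 ≤ ε) (hε1 : ε ≤ 1)
    (hsum : ∀ ω, ∑ i ∈ range (M ω), Z i ω = K) :
    ENNReal.ofReal (1 - exp (-(K * ε ^ 2 / (4 * (exp 1 - 2) * (1 + ε)))))
      ≤ P {ω | (∑ i ∈ range (M ω), Z i ω) / M ω ≤ (1 + ε) * μ} := by
  set n := ⌊K / ((1 + ε) * μ)⌋₊
  have hK : 0 ≤ K := by
    obtain ⟨ω⟩ := nonempty_of_isProbabilityMeasure P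
    rw [← hsum ω]
    exact sum_nonneg fun i _ ↦ nonneg_of_eq_zero_or_eq_one (hval i ω)
  have hn : (1 + ε) * ∑ i ∈ range n, P.real {ω | Z i ω = 1} ≤ K := by
    have := Nat.floor_le (a := K / ((1 + ε) * μ)) (by positivity)
    rw [le_div_iff₀ (by positivity)] at this
    simp only [hp, sum_const, card_range, nsmul_eq_mul]
    linarith
  refine ofReal_one_sub_le_of_measureReal_compl_le ((measureReal_mono fun ω hω ↦ ?_).trans
    (hindep.measureReal_sum_ge_le_exp_of_one_add_mul_le hmeas hval (range n) hε0 hε1 hn))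
  have hS : Monotone fun n ↦ ∑ i ∈ range n, Z i ω :=
    (sum_mono_set_of_nonneg fun i ↦ nonneg_of_eq_zero_or_eq_one (hval i ω)).comp range_mono
  simp only [Set.mem_compl_iff, Set.mem_ofPred_eq, not_le] at hω
  simpa [hsum] using hS.apply_le_apply_floor_of_lt_div (by positivity) hω

theorem ofReal_one_sub_exp_le_measure_le_mean (hindep : iIndepFun Z P)
    (hmeas : ∀ i, Measurable (Z i)) (hval : ∀ i ω, Z i ω = 0 ∨ Z i ω = 1)
    (hp : ∀ i, P.real {ω | Z i ω = 1} = μ) (hμ : 0 < μ) (hε0 : 0 ≤ ε) (hε1 : ε < 1)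
    (hK : 0 < K) (hsum : ∀ ω, ∑ i ∈ range (M ω), Z i ω = K) :
    ENNReal.ofReal (1 - exp (-(K * ε ^ 2 / 2)))
      ≤ P {ω | (1 - ε) * μ ≤ (∑ i ∈ range (M ω), Z i ω) / M ω} := by
  set n := ⌈K / ((1 - ε) * μ)⌉₊
  have hr : 0 < (1 - ε) * μ := mul_pos (by linarith) hμ
  have hn : K ≤ (1 - ε) * ∑ i ∈ range n, P.real {ω | Z i ω = 1} := by
    have := Nat.le_ceil (K / ((1 - ε) * μ))
    rw [div_le_iff₀ hr] at this
    simp only [hp, sum_const, card_range, nsmul_eq_mul]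
    linarith
  refine ofReal_one_sub_le_of_measureReal_compl_le ((measureReal_mono fun ω hω ↦ ?_).trans
    (hindep.measureReal_sum_le_le_exp_of_le_one_sub_mul hmeas hval (range n) hε0 hn))
  have hS : Monotone fun n ↦ ∑ i ∈ range n, Z i ω :=
    (sum_mono_set_of_nonneg fun i ↦ nonneg_of_eq_zero_or_eq_one (hval i ω)).comp range_mono
  have hM : 0 < M ω := Nat.pos_of_ne_zero fun h ↦ by simpa [h, hK.ne] using hsum ω
  simp only [Set.mem_compl_iff, Set.mem_ofPred_eq, not_le] at hω
  simpa [hsum] using hS.apply_ceil_le_apply_of_div_lt hr hM hω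

end StoppingRule

end ProbabilityTheory

theorem stmt0_general
    {Ω : Type*} [MeasurableSpace Ω] (P : Measure Ω) [IsProbabilityMeasure P]
    (Z : ℕ → Ω → ℝ) (μ : ℝ) (hμ : 0 < μ)
    (hmeas : ∀ i, StronglyMeasurable (Z i))
    (hval : ∀ i ω, Z i ω = 0 ∨ Z i ω = 1)
    (hindep : iIndepFun Z P)
    (hident : ∀ i, P {ω | Z i ω = 1} = ENNReal.ofReal μ)
    (ε δ : ℝ) (hε : ε ∈ Set.Ioo (0:ℝ) 1) (hδ : δ ∈ Set.Ioo (0:ℝ) 1)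
    (Υ₁ : ℝ)
    (hΥ : Υ₁ = 1 + (1 + ε) * (4 * (Real.exp 1 - 2) * Real.log (2 / δ) / ε ^ 2))
    (M : Ω → ℕ)
    (hsum : ∀ ω, (∑ i ∈ Finset.range (M ω), Z i ω) = (⌈Υ₁⌉ : ℝ)) :
    P {ω | (∑ i ∈ Finset.range (M ω), Z i ω) / (M ω : ℝ) ≤ (1 + ε) * μ}
      ≥ ENNReal.ofReal (1 - δ / 2) ∧
    P {ω | (∑ i ∈ Finset.range (M ω), Z i ω) / (M ω : ℝ)
        ≥ ((⌈Υ₁⌉ : ℝ) / ((⌈Υ₁⌉ : ℝ) + 1)) * ((1 - ε) * μ)}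
      ≥ ENNReal.ofReal (1 - δ / 2) := by
  obtain ⟨hε0, hε1⟩ := hε
  obtain ⟨hδ0, hδ1⟩ := hδ
  set K : ℝ := (⌈Υ₁⌉ : ℝ)
  have hZ_meas : ∀ i, Measurable (Z i) := fun i ↦ (hmeas i).measurable
  have hp : ∀ i, P.real {ω | Z i ω = 1} = μ := fun i ↦ by
    rw [measureReal_def, hident, ENNReal.toReal_ofReal hμ.le]
  have hc : 1 / 2 < exp 1 - 2 := by linarith [exp_one_gt_d9]
  have hL : 0 < log (2 / δ) := log_pos (by rw [lt_div_iff₀ hδ0]; linarith)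
  have hKε : 4 * (exp 1 - 2) * (1 + ε) * log (2 / δ) ≤ K * ε ^ 2 := by
    have hΥK : (1 + ε) * (4 * (exp 1 - 2) * log (2 / δ) / ε ^ 2) ≤ K := by
      linarith [Int.le_ceil Υ₁]
    rw [mul_div_assoc', div_le_iff₀ (by positivity)] at hΥK
    linarith
  have hK : 0 < K := pos_of_mul_pos_left (hKε.trans_lt' (by positivity)) (sq_nonneg ε)
  have hδ_bound {a : ℝ} (ha : log (2 / δ) ≤ a) :
      ENNReal.ofReal (1 - δ / 2) ≤ ENNReal.ofReal (1 - exp (-a)) := by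
    refine ENNReal.ofReal_le_ofReal ?_
    have := exp_le_exp.2 (neg_le_neg ha)
    rw [exp_neg (log _), exp_log (by positivity), inv_div] at this
    linarith
  constructor
  · refine (hδ_bound ?_).trans (ofReal_one_sub_exp_le_measure_mean_le hindep hZ_meas hval hp hμ
      hε0.le hε1.le hsum)
    rw [le_div_iff₀ (by positivity)]
    linarith
  · refine (hδ_bound ?_).trans ((ofReal_one_sub_exp_le_measure_le_mean hindep hZ_meas hval hp hμ
      hε0.le hε1 hK hsum).trans (measure_mono fun ω hω ↦ ?_))
    · rw [le_div_iff₀ two_pos]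
      nlinarith [mul_pos (by nlinarith : 0 < 4 * (exp 1 - 2) * (1 + ε) - 2) hL]
    · simp only [Set.mem_ofPred_eq] at hω ⊢
      refine le_trans ?_ hω
      refine mul_le_of_le_one_left (mul_pos (by linarith) hμ).le ?_
      exact div_le_one_of_le₀ (by linarith) (by linarith)

/-- Theorem 1 (stopping-rule sample): if `Z₁, Z₂, ...` are i.i.d. Bernoulli with mean
`μ > 0` and `M` is a stopping time with `Z₁ + ... + Z_M = ⌈Υ₁⌉`, then the empirical mean
`(Z₁+...+Z_M)/M` satisfies the two stated probability bounds. -/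
theorem stmt0
    {Ω : Type*} [MeasurableSpace Ω] (P : Measure Ω) [IsProbabilityMeasure P]
    (Z : ℕ → Ω → ℝ) (μ : ℝ) (hμ : 0 < μ)
    (hmeas : ∀ i, StronglyMeasurable (Z i))
    (hval : ∀ i ω, Z i ω = 0 ∨ Z i ω = 1)
    (hindep : iIndepFun Z P)
    (hident : ∀ i, P {ω | Z i ω = 1} = ENNReal.ofReal μ)
    (ε δ : ℝ) (hε : ε ∈ Set.Ioo (0:ℝ) 1) (hδ : δ ∈ Set.Ioo (0:ℝ) 1)
    (Υ₁ : ℝ)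
    (hΥ : Υ₁ = 1 + (1 + ε) * (4 * (Real.exp 1 - 2) * Real.log (2 / δ) / ε ^ 2))
    (M : Ω → ℕ)
    (hstop : IsStoppingTime (MeasureTheory.Filtration.natural Z hmeas) (fun ω => (M ω : WithTop ℕ)))
    (hsum : ∀ ω, (∑ i ∈ Finset.range (M ω), Z i ω) = (⌈Υ₁⌉ : ℝ)) :
    P {ω | (∑ i ∈ Finset.range (M ω), Z i ω) / (M ω : ℝ) ≤ (1 + ε) * μ}
      ≥ ENNReal.ofReal (1 - δ / 2) ∧
    P {ω | (∑ i ∈ Finset.range (M ω), Z i ω) / (M ω : ℝ)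
        ≥ ((⌈Υ₁⌉ : ℝ) / ((⌈Υ₁⌉ : ℝ) + 1)) * ((1 - ε) * μ)}
      ≥ ENNReal.ofReal (1 - δ / 2) :=
  stmt0_general P Z μ hμ hmeas hval hindep hident ε δ hε hδ Υ₁ hΥ M hsum
end

section
/- Let X₁,...,X_{M₁} be i.i.d. Bernoulli random variables with mean p = I/n where I ≥ n·Υ₁/M₁ and Υ₁ = Υ₁(ε, δ/n) with ε ≤ 1/3. Then Pr[Σᵢ Xᵢ < Υ₁/2] ≤ exp(−(e−2)ln(2n/δ)/(2ε²)) ≤ δ/(2n). -/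
/-!
The Chernoff bound with `t = -log 2` gives `Pr[S ≤ a] ≤ exp(a log 2 - μ/2)` for a sum `S` of
independent Bernoulli variables with mean `μ = M₁ p ≥ Υ₁`. At `a = Υ₁/2`, since `log 2 ≤ 3/4`
the exponent is at most `-Υ₁/8`, and `Υ₁ ≥ 4(e-2) ln(2n/δ)/ε²` turns this into the claimed
bound. Finally `ε ≤ 1/3` and `e - 2 ≥ 2/9` give `(e-2)/(2ε²) ≥ 1`, whence the bound is at most
`exp(-ln(2n/δ)) = δ/(2n)`.
-/

open MeasureTheory ProbabilityTheory Real

section ZeroOne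

variable {Ω : Type*} [MeasurableSpace Ω] {P : Measure Ω} [IsProbabilityMeasure P]

lemma mgf_of_zero_one {Y : Ω → ℝ} (hY : Measurable Y) (hval : ∀ ω, Y ω = 0 ∨ Y ω = 1)
    (t : ℝ) : mgf Y P t = 1 + (exp t - 1) * P.real {ω | Y ω = 1} := by
  have hset : MeasurableSet {ω | Y ω = 1} := hY (measurableSet_singleton 1)
  have hexp : (fun ω => exp (t * Y ω))
      = fun ω => 1 + {ω | Y ω = 1}.indicator (fun _ => exp t - 1) ω := by
    funext ω
    rcases hval ω with h | h <;> simp [h, Set.indicator]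
  rw [mgf, hexp, integral_add (integrable_const 1) ((integrable_const _).indicator hset),
    integral_const, integral_indicator_const _ hset]
  simp only [probReal_univ, smul_eq_mul, one_mul]
  ring

lemma mgf_le_exp_of_zero_one {Y : Ω → ℝ} (hY : Measurable Y)
    (hval : ∀ ω, Y ω = 0 ∨ Y ω = 1) (t : ℝ) :
    mgf Y P t ≤ exp ((exp t - 1) * P.real {ω | Y ω = 1}) := by
  rw [mgf_of_zero_one hY hval, add_comm]
  exact add_one_le_exp _

lemma measureReal_sum_le_le_of_zero_one {ι : Type*} {X : ι → Ω → ℝ}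
    (hmeas : ∀ i, Measurable (X i)) (hval : ∀ i ω, X i ω = 0 ∨ X i ω = 1)
    (hindep : iIndepFun X P) (s : Finset ι) {t : ℝ} (ht : t ≤ 0) (a : ℝ) :
    P.real {ω | ∑ i ∈ s, X i ω ≤ a}
      ≤ exp (-t * a + (exp t - 1) * ∑ i ∈ s, P.real {ω | X i ω = 1}) := by
  have hint : ∀ i ∈ s, Integrable (fun ω => exp (t * X i ω)) P := by
    intro i _
    refine Integrable.of_bound (by fun_prop) 1 (ae_of_all _ fun ω => ?_)
    rcases hval i ω with h | h <;> simp [h, ht]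
  calc P.real {ω | ∑ i ∈ s, X i ω ≤ a}
      = P.real {ω | (∑ i ∈ s, X i) ω ≤ a} := by simp only [Finset.sum_apply]
    _ ≤ exp (-t * a) * mgf (∑ i ∈ s, X i) P t :=
        measure_le_le_exp_mul_mgf a ht (hindep.integrable_exp_mul_sum hmeas hint)
    _ = exp (-t * a) * ∏ i ∈ s, mgf (X i) P t := by rw [hindep.mgf_sum hmeas]
    _ ≤ exp (-t * a) * ∏ i ∈ s, exp ((exp t - 1) * P.real {ω | X i ω = 1}) := by
        gcongr with i
        · exact fun _ _ => mgf_nonneg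
        · exact mgf_le_exp_of_zero_one (hmeas i) (hval i) t
    _ = _ := by rw [← exp_sum, ← exp_add, Finset.mul_sum]

end ZeroOne

lemma log_two_mul_half_sub_half_le {Υ μ L ε : ℝ} (hL : 0 ≤ L) (hε : 0 < ε)
    (hΥ : Υ = 1 + (1 + ε) * (4 * (exp 1 - 2) * L / ε ^ 2)) (hμ : Υ ≤ μ) :
    log 2 * (Υ / 2) - μ / 2 ≤ -((exp 1 - 2) * L) / (2 * ε ^ 2) := by
  set A := (exp 1 - 2) * L / ε ^ 2
  have hA : 0 ≤ A := div_nonneg (mul_nonneg (by linarith [exp_one_gt_d9]) hL) (sq_nonneg ε)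
  have hΥA : 4 * A ≤ Υ := by
    rw [show Υ = 1 + (1 + ε) * (4 * A) by rw [hΥ]; ring]
    nlinarith [mul_nonneg hε.le hA]
  have hlog2 : log 2 ≤ 3 / 4 := by have := log_two_lt_d9; linarith
  have hA2 : -((exp 1 - 2) * L) / (2 * ε ^ 2) = -A / 2 := by ring
  rw [hA2]
  nlinarith

lemma exp_neg_div_le_exp_neg {L ε : ℝ} (hL : 0 ≤ L) (hε0 : 0 < ε) (hε : ε ≤ 1 / 3) :
    exp (-((exp 1 - 2) * L) / (2 * ε ^ 2)) ≤ exp (-L) := by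
  have he : 2 / 9 ≤ exp 1 - 2 := by have := exp_one_gt_d9; linarith
  have hε2 : ε ^ 2 ≤ 1 / 9 := by nlinarith
  rw [exp_le_exp, div_le_iff₀ (by positivity)]
  nlinarith [mul_le_mul_of_nonneg_left hε2 hL, mul_le_mul_of_nonneg_right he hL]

/-- If `X₁,...,X_{M₁}` are i.i.d. Bernoulli with mean `p = I/n` and `I ≥ n·Υ₁/M₁`, where
`Υ₁ = Υ₁(ε, δ/n)` and `ε ≤ 1/3`, then
`Pr[Σ Xᵢ < Υ₁/2] ≤ exp(−(e−2)ln(2n/δ)/(2ε²)) ≤ δ/(2n)`. -/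
theorem stmt4
    {Ω : Type*} [MeasurableSpace Ω] (P : Measure Ω) [IsProbabilityMeasure P]
    (M₁ n : ℕ) (hM₁ : 0 < M₁) (hn : 1 ≤ n)
    (δ : ℝ) (hδ0 : 0 < δ) (hδ : δ ≤ 1 / 4)
    (ε : ℝ) (hε0 : 0 < ε) (hε : ε ≤ 1 / 3)
    (Υ₁ : ℝ)
    (hΥ : Υ₁ = 1 + (1 + ε) * (4 * (Real.exp 1 - 2) * Real.log (2 * n / δ) / ε ^ 2))
    (I : ℝ) (hI : I ≥ n * Υ₁ / M₁)
    (X : ℕ → Ω → ℝ) (hmeas : ∀ i, Measurable (X i))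
    (hval : ∀ i ω, X i ω = 0 ∨ X i ω = 1)
    (hindep : iIndepFun X P)
    (hident : ∀ i, P {ω | X i ω = 1} = ENNReal.ofReal (I / n)) :
    P {ω | (∑ i ∈ Finset.range M₁, X i ω) < Υ₁ / 2}
        ≤ ENNReal.ofReal (Real.exp (-((Real.exp 1 - 2) * Real.log (2 * n / δ)) / (2 * ε ^ 2))) ∧
    Real.exp (-((Real.exp 1 - 2) * Real.log (2 * n / δ)) / (2 * ε ^ 2)) ≤ δ / (2 * n) := by
  have hn0 : (0 : ℝ) < n := by exact_mod_cast hn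
  have hM0 : (0 : ℝ) < M₁ := by exact_mod_cast hM₁
  have hL : 0 ≤ log (2 * n / δ) := by
    refine log_nonneg ((le_div_iff₀ hδ0).2 ?_)
    linarith [(by exact_mod_cast hn : (1 : ℝ) ≤ n)]
  have hmean : Υ₁ ≤ ∑ i ∈ Finset.range M₁, P.real {ω | X i ω = 1} := by
    have hp : Υ₁ / M₁ ≤ I / n := by
      rw [ge_iff_le, div_le_iff₀ hM0] at hI
      rw [div_le_div_iff₀ hM0 hn0]
      linarith
    simp only [measureReal_def, hident, ENNReal.toReal_ofReal', Finset.sum_const,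
      Finset.card_range, nsmul_eq_mul]
    exact ((div_le_iff₀' hM0).1 hp).trans (mul_le_mul_of_nonneg_left (le_max_left _ _) hM0.le)
  have htail := measureReal_sum_le_le_of_zero_one hmeas hval hindep (Finset.range M₁)
    (neg_nonpos.2 (log_nonneg one_le_two)) (Υ₁ / 2)
  rw [exp_neg, exp_log two_pos, neg_neg] at htail
  refine ⟨?_, ?_⟩
  · calc P {ω | ∑ i ∈ Finset.range M₁, X i ω < Υ₁ / 2}
        ≤ P {ω | ∑ i ∈ Finset.range M₁, X i ω ≤ Υ₁ / 2} :=
          measure_mono (Set.ofPred_subset_ofPred.2 fun _ => le_of_lt)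
      _ = ENNReal.ofReal (P.real {ω | ∑ i ∈ Finset.range M₁, X i ω ≤ Υ₁ / 2}) :=
        (ofReal_measureReal (measure_ne_top _ _)).symm
      _ ≤ _ := by
        refine ENNReal.ofReal_le_ofReal (htail.trans (exp_le_exp.2 ?_))
        linarith [log_two_mul_half_sub_half_le hL hε0 hΥ hmean]
  · calc exp (-((exp 1 - 2) * log (2 * n / δ)) / (2 * ε ^ 2))
        ≤ exp (-log (2 * n / δ)) := exp_neg_div_le_exp_neg hL hε0 hε
      _ = δ / (2 * n) := by rw [← log_inv, exp_log (by positivity), inv_div]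
end

section
/- Suppose that for every vertex set S of size k, |D₂(S)/M₂ − I(S)/n| ≤ ε·I(S*_k)/n, where S*_k maximizes I over k-sets. Let S_k be any k-set satisfying D₂(S_k) ≥ (1 − 1/e)·D₂(S*_k). Then I(S_k) ≥ [1 − 1/e − (2 − 1/e)ε]·I(S*_k). -/
/-! With `δ = ε I(S*)/n` and `α = 1 - 1/e`, chain the two deviation bounds through the greedy
ratio: `I(Sₖ)/n ≥ D₂(Sₖ)/M₂ - δ ≥ α D₂(S*)/M₂ - δ ≥ α (I(S*)/n - δ) - δ`. -/

lemma le_of_mul_le_of_abs_sub_le {α d d' x x' δ : ℝ} (hα : 0 ≤ α) (hd : α * d' ≤ d)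
    (hx : |d - x| ≤ δ) (hx' : |d' - x'| ≤ δ) : α * x' - (1 + α) * δ ≤ x := by
  have hdx : d - δ ≤ x := by linarith [(abs_le.mp hx).2]
  have hdx' : α * (x' - δ) ≤ α * d' :=
    mul_le_mul_of_nonneg_left (by linarith [(abs_le.mp hx').1]) hα
  linarith

lemma one_sub_one_div_exp_one_nonneg : 0 ≤ 1 - 1 / Real.exp 1 :=
  sub_nonneg.mpr ((div_le_one (Real.exp_pos 1)).mpr (Real.one_le_exp zero_le_one))

theorem stmt6_general {V : Type*}
    (I : Finset V → ℝ)
    (D₂ : Finset V → ℕ) (M₂ n : ℕ) (hn : 0 < n)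
    (ε : ℝ) (k : ℕ)
    (Sstar : Finset V) (hSstar : Sstar.card = k)
    (hdev : ∀ S : Finset V, S.card = k →
      |(D₂ S : ℝ) / M₂ - I S / n| ≤ ε * I Sstar / n)
    (Sk : Finset V) (hSk : Sk.card = k)
    (hgreedy : (D₂ Sk : ℝ) ≥ (1 - 1 / Real.exp 1) * D₂ Sstar) :
    I Sk ≥ (1 - 1 / Real.exp 1 - (2 - 1 / Real.exp 1) * ε) * I Sstar := by
  set α := 1 - 1 / Real.exp 1
  have hgreedy' : α * ((D₂ Sstar : ℝ) / M₂) ≤ (D₂ Sk : ℝ) / M₂ := by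
    rw [mul_div_assoc']
    gcongr
  have key := le_of_mul_le_of_abs_sub_le one_sub_one_div_exp_one_nonneg hgreedy'
    (hdev Sk hSk) (hdev Sstar hSstar)
  have hn' : (0 : ℝ) < n := by exact_mod_cast hn
  rw [ge_iff_le, ← div_le_div_iff_of_pos_right hn']
  calc (α - (2 - 1 / Real.exp 1) * ε) * I Sstar / n
      = α * (I Sstar / n) - (1 + α) * (ε * I Sstar / n) := by ring
    _ ≤ I Sk / n := key

/-- If every `k`-set `S` satisfies `|D₂(S)/M₂ − I(S)/n| ≤ ε·I(S*_k)/n` where `S*_k`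
maximizes `I` over `k`-sets, and `S_k` is a `k`-set with
`D₂(S_k) ≥ (1 − 1/e)·D₂(S*_k)`, then `I(S_k) ≥ [1 − 1/e − (2 − 1/e)ε]·I(S*_k)`. -/
theorem stmt6 {V : Type*} [Fintype V] [DecidableEq V]
    (I : Finset V → ℝ) (hI : ∀ S, 0 ≤ I S)
    (D₂ : Finset V → ℕ) (M₂ n : ℕ) (hM₂ : 0 < M₂) (hn : 0 < n)
    (ε : ℝ) (hε : 0 < ε) (k : ℕ) (hk : 1 ≤ k)
    (Sstar : Finset V) (hSstar : Sstar.card = k)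
    (hmax : ∀ S : Finset V, S.card = k → I S ≤ I Sstar)
    (hdev : ∀ S : Finset V, S.card = k →
      |(D₂ S : ℝ) / M₂ - I S / n| ≤ ε * I Sstar / n)
    (Sk : Finset V) (hSk : Sk.card = k)
    (hgreedy : (D₂ Sk : ℝ) ≥ (1 - 1 / Real.exp 1) * D₂ Sstar) :
    I Sk ≥ (1 - 1 / Real.exp 1 - (2 - 1 / Real.exp 1) * ε) * I Sstar :=
  stmt6_general I D₂ M₂ n hn ε k Sstar hSstar hdev Sk hSk hgreedy
end

section
/- Let D be a monotone submodular coverage function as above, and let S_k = {u_1,...,u_k} be built greedily (u_i maximizes marginal gain at step i over all of V), and S'_k = {u'_1,...,u'_k} be built greedily restricted to U = {v : D({v}) > T}. Let q be the smallest index such that the marginal gain of u'_q in building S'_k is ≤ T (q = k+1 if none exists). Then D(S'_k) ≥ D(S_k) − (k − q + 1)·T. -/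
/-!
Up to step `q - 1` the two greedy runs agree, so `D(S_{q-1}) = D(S'_{q-1}) ≤ D(S'_k)`.
The unrestricted greedy gain at step `q` is at most `T`: a vertex outside `U` gains at most
`D({v}) ≤ T`, and a vertex of `U` gains at most what the restricted greedy choice gains, which
is `≤ T` by the choice of `q`. Greedy gains of a submodular function are non-increasing, so each
of the last `k - q + 1` steps of the unrestricted run adds at most `T`.
-/

open Finset

-- Submodularity of `f` in its diminishing-returns form, with both sides moved so that no
-- subtraction occurs.
def DiminishingReturns {V : Type*} [DecidableEq V] (f : Finset V → ℕ) : Prop :=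
  ∀ ⦃A B : Finset V⦄, A ⊆ B → ∀ v, f (insert v B) + f A ≤ f (insert v A) + f B

section Coverage

variable {ι V : Type*} [Fintype ι] [DecidableEq V]

def coveredBy (R : ι → Finset V) (S : Finset V) : Finset ι :=
  univ.filter fun i => (R i ∩ S).Nonempty

theorem coveredBy_mono (R : ι → Finset V) : Monotone (coveredBy R) := by
  intro A B hAB i
  simp only [coveredBy, mem_filter, mem_univ, true_and]
  exact fun h => h.mono (inter_subset_inter_left hAB)

theorem coveredBy_union [DecidableEq ι] (R : ι → Finset V) (A B : Finset V) :
    coveredBy R (A ∪ B) = coveredBy R A ∪ coveredBy R B := by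
  simp only [coveredBy, inter_union_distrib_left, union_nonempty, filter_or]

theorem diminishingReturns_card_coveredBy [DecidableEq ι] (R : ι → Finset V) :
    DiminishingReturns fun S => #(coveredBy R S) := by
  intro A B hAB v
  have hB : insert v B = insert v A ∪ B := by
    rw [insert_union, union_eq_right.2 hAB]
  have hA : coveredBy R A ⊆ coveredBy R (insert v A) ∩ coveredBy R B :=
    subset_inter (coveredBy_mono R (subset_insert v A)) (coveredBy_mono R hAB)
  beta_reduce
  rw [hB, coveredBy_union, ← card_union_add_card_inter (coveredBy R (insert v A))]
  exact Nat.add_le_add_left (card_le_card hA) _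

end Coverage

section Greedy

variable {V : Type*} [DecidableEq V] {f : Finset V → ℕ}

theorem greedy_gain_succ_le
    (hdr : DiminishingReturns f)
    {P : ℕ → Finset V} {u : ℕ → V} (hP : ∀ i, P (i + 1) = insert (u i) (P i)) {i : ℕ}
    (hgreedy : ∀ v, f (insert v (P i)) ≤ f (insert (u i) (P i))) :
    (f (P (i + 2)) : ℝ) - f (P (i + 1)) ≤ f (P (i + 1)) - f (P i) := by
  have hsub : f (P (i + 2)) + f (P i) ≤ f (insert (u (i + 1)) (P i)) + f (P (i + 1)) := by
    rw [hP (i + 1)]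
    exact hdr (hP i ▸ subset_insert (u i) (P i)) _
  have hmax : f (insert (u (i + 1)) (P i)) ≤ f (P (i + 1)) := hP i ▸ hgreedy _
  have : (f (P (i + 2)) : ℝ) + f (P i) ≤ f (P (i + 1)) + f (P (i + 1)) := by
    exact_mod_cast (by omega)
  linarith

theorem gain_le_of_restricted_greedy
    (hdr : DiminishingReturns f)
    {A : Finset V} {w : V} {T : ℝ}
    (hw : ∀ v, T < f {v} → f (insert v A) ≤ f (insert w A))
    (hwT : (f (insert w A) : ℝ) - f A ≤ T) (v : V) :
    (f (insert v A) : ℝ) - f A ≤ T := by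
  by_cases hv : T < f {v}
  · have : (f (insert v A) : ℝ) ≤ f (insert w A) := by exact_mod_cast hw v hv
    linarith
  · have hsub := hdr (empty_subset A) v
    rw [insert_empty] at hsub
    have : (f (insert v A) : ℝ) + f ∅ ≤ f {v} + f A := by exact_mod_cast hsub
    linarith [not_lt.1 hv, (f ∅).cast_nonneg (α := ℝ)]

end Greedy

theorem sub_le_mul_of_increments_antitone (a : ℕ → ℝ) {p k : ℕ} {T : ℝ} (hpk : p ≤ k)
    (hanti : ∀ i, i + 1 < k → a (i + 2) - a (i + 1) ≤ a (i + 1) - a i)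
    (hp : p < k → a (p + 1) - a p ≤ T) :
    a k - a p ≤ (k - p) * T := by
  have hstep : ∀ i ∈ Ico p k, a (i + 1) - a i ≤ T := by
    intro i hi
    obtain ⟨hpi, hik⟩ := mem_Ico.1 hi
    induction i, hpi using Nat.le_induction with
    | base => exact hp hik
    | succ i hpi ih => exact (hanti i hik).trans (ih (mem_Ico.2 ⟨hpi, by omega⟩) (by omega))
  calc a k - a p = ∑ i ∈ Ico p k, (a (i + 1) - a i) := (sum_Ico_sub a hpk).symm
    _ ≤ #(Ico p k) • T := sum_le_card_nsmul _ _ _ hstep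
    _ = (k - p) * T := by rw [Nat.card_Ico, nsmul_eq_mul, Nat.cast_sub hpk]

theorem stmt8_general {V : Type*} [DecidableEq V]
    (M : ℕ) (R : Fin M → Finset V)
    (D : Finset V → ℕ)
    (hD : ∀ S, D S = (Finset.univ.filter fun i : Fin M => (R i ∩ S).Nonempty).card)
    (k : ℕ) (T : ℝ)
    (u u' : ℕ → V)
    (S S' : ℕ → Finset V)
    (hS : ∀ i, S i = (Finset.range i).image u)
    (hS' : ∀ i, S' i = (Finset.range i).image u')
    -- unrestricted greedy: at each step `u i` maximizes the marginal gain over all of `V`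
    (hgreedy : ∀ i < k, ∀ v : V, D (insert v (S i)) ≤ D (insert (u i) (S i)))
    -- restricted greedy: `u' i ∈ U` and maximizes the marginal gain over `U`
    (hgreedy' : ∀ i < k, ∀ v : V, (D {v} : ℝ) > T →
      D (insert v (S' i)) ≤ D (insert (u' i) (S' i)))
    (q : ℕ) (hq1 : 1 ≤ q) (hq2 : q ≤ k + 1)
    -- at step `q` (if it exists), the marginal gain is at most `T`
    (hqsmall : q ≤ k → (D (S' q) : ℝ) - D (S' (q - 1)) ≤ T)
    -- consistent tie-breaking: the two runs coincide while gains exceed `T`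
    (hcoin : ∀ i, i + 1 < q → u i = u' i) :
    (D (S' k) : ℝ) ≥ (D (S k) : ℝ) - ((k : ℝ) - q + 1) * T := by
  obtain ⟨p, rfl⟩ : ∃ p, q = p + 1 := ⟨q - 1, by omega⟩
  have hD' : ∀ A, D A = #(coveredBy R A) := hD
  have hdr : DiminishingReturns D := by
    simpa only [DiminishingReturns, hD'] using diminishingReturns_card_coveredBy R
  have hDmono : Monotone D := fun A B hAB => by
    simpa only [hD'] using card_le_card (coveredBy_mono R hAB)
  have hSstep i : S (i + 1) = insert (u i) (S i) := by rw [hS, hS, range_add_one, image_insert]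
  have hS'step i : S' (i + 1) = insert (u' i) (S' i) := by
    rw [hS', hS', range_add_one, image_insert]
  have hagree : S p = S' p := by
    rw [hS, hS']
    exact image_congr fun i hi => hcoin i (Nat.succ_lt_succ (mem_range.1 hi))
  have hgrowth := sub_le_mul_of_increments_antitone (fun i => (D (S i) : ℝ)) (T := T)
    (by omega : p ≤ k)
    (fun i hi => greedy_gain_succ_le hdr hSstep (hgreedy i (by omega)))
    (fun hpk => by
      have hwT := hqsmall (by omega)
      rw [add_tsub_cancel_right, hS'step] at hwT
      simpa only [hSstep, hagree] using
        gain_le_of_restricted_greedy hdr (hgreedy' p hpk) hwT (u p))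
  have hS'mono : D (S' p) ≤ D (S' k) := by
    refine hDmono ?_
    rw [hS', hS']
    exact image_subset_image (range_subset_range.2 (by omega))
  simp only [hagree] at hgrowth
  push_cast
  linarith [(by exact_mod_cast hS'mono : (D (S' p) : ℝ) ≤ D (S' k))]

/-- Filtered greedy: if `S_k` is built greedily over all of `V` and `S'_k` greedily over
`U = {v : D({v}) > T}`, the two runs coincide while marginal gains exceed `T` (consistent
tie-breaking), and `q` is the first (1-based) step at which the marginal gain of the
restricted run drops to `≤ T` (`q = k+1` if none), then
`D(S'_k) ≥ D(S_k) − (k − q + 1)·T`. -/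
theorem stmt8 {V : Type*} [Fintype V] [DecidableEq V]
    (M : ℕ) (R : Fin M → Finset V)
    (D : Finset V → ℕ)
    (hD : ∀ S, D S = (Finset.univ.filter fun i : Fin M => (R i ∩ S).Nonempty).card)
    (k : ℕ) (hk : 1 ≤ k) (T : ℝ) (hT : 0 ≤ T)
    (u u' : ℕ → V)
    (S S' : ℕ → Finset V)
    (hS : ∀ i, S i = (Finset.range i).image u)
    (hS' : ∀ i, S' i = (Finset.range i).image u')
    -- unrestricted greedy: at each step `u i` maximizes the marginal gain over all of `V`
    (hgreedy : ∀ i < k, ∀ v : V, D (insert v (S i)) ≤ D (insert (u i) (S i)))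
    -- restricted greedy: `u' i ∈ U` and maximizes the marginal gain over `U`
    (hU : ∀ i < k, (D {u' i} : ℝ) > T)
    (hgreedy' : ∀ i < k, ∀ v : V, (D {v} : ℝ) > T →
      D (insert v (S' i)) ≤ D (insert (u' i) (S' i)))
    (q : ℕ) (hq1 : 1 ≤ q) (hq2 : q ≤ k + 1)
    -- before step `q`, all marginal gains of the restricted run exceed `T`
    (hqbig : ∀ j, 1 ≤ j → j < q → T < (D (S' j) : ℝ) - D (S' (j - 1)))
    -- at step `q` (if it exists), the marginal gain is at most `T`
    (hqsmall : q ≤ k → (D (S' q) : ℝ) - D (S' (q - 1)) ≤ T)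
    -- consistent tie-breaking: the two runs coincide while gains exceed `T`
    (hcoin : ∀ i, i + 1 < q → u i = u' i) :
    (D (S' k) : ℝ) ≥ (D (S k) : ℝ) - ((k : ℝ) - q + 1) * T :=
  stmt8_general M R D hD k T u u' S S' hS hS' hgreedy hgreedy' q hq1 hq2 hqsmall hcoin
end

section
/- In the setting of the filtered greedy algorithm, if D* = max_{v∈V} D({v}) ≥ 2 and the threshold is T = min{D*/(k−1), D* − 1}, then D(S'_k) ≥ (1/2)·D(S_k). -/
/-!
Greedy marginal gains are nonincreasing by submodularity of coverage. With `p = q - 1` the two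
runs agree up to `S_p = S'_p`, and `p ≥ 1` because the first filtered step gains more than `T`.
At step `p` the filtered run picked the best vertex above the threshold and gained at most `T`,
so no vertex at all gains more than `T` over `S_p`; hence each of the last `k - p` unrestricted
steps gains at most `T`, and `D(S_k) ≤ D(S'_k) + (k - 1) T ≤ D(S'_k) + D* ≤ 2 D(S'_k)`, since the
first filtered step already covers `D*`.
-/

open Finset

theorem Finset.card_union_add_card_le_of_subset {α : Type*} [DecidableEq α] {s t u : Finset α}
    (h : s ⊆ t) : #(t ∪ u) + #s ≤ #(s ∪ u) + #t := by
  have hs := card_union_add_card_inter s u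
  have ht := card_union_add_card_inter t u
  have hst : #(s ∩ u) ≤ #(t ∩ u) := card_le_card (inter_subset_inter_right h)
  omega

theorem mul_min_div_le {a b c : ℝ} (ha : 0 ≤ a) (hc : 0 ≤ c) : c * min (a / c) b ≤ a := by
  rcases hc.eq_or_lt with rfl | hc
  · simpa using ha
  · calc c * min (a / c) b ≤ c * (a / c) := by gcongr; exact min_le_left _ _
      _ = a := mul_div_cancel₀ a hc.ne'

section Coverage

variable {ι V : Type*} [Fintype ι] [DecidableEq V]

def coverage (R : ι → Finset V) (A : Finset V) : ℕ :=
  #{i | (R i ∩ A).Nonempty}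

theorem coverage_empty (R : ι → Finset V) : coverage R ∅ = 0 := by
  simp [coverage]

theorem coverage_mono (R : ι → Finset V) : Monotone (coverage R) := fun _ _ h =>
  card_le_card <| monotone_filter_right _ fun _ _ hi => hi.mono (inter_subset_inter_left h)

theorem Finset.inter_insert_nonempty_iff (s A : Finset V) (v : V) :
    (s ∩ insert v A).Nonempty ↔ (s ∩ A).Nonempty ∨ v ∈ s := by
  by_cases h : v ∈ s
  · simp [inter_insert_of_mem h, h]
  · simp [inter_insert_of_notMem h, h]

theorem coverage_insert_add_le (R : ι → Finset V) ⦃A B : Finset V⦄ (h : A ⊆ B) (v : V) :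
    coverage R (insert v B) + coverage R A ≤ coverage R (insert v A) + coverage R B := by
  classical
  have hins (X : Finset V) :
      coverage R (insert v X) =
        #(({i | (R i ∩ X).Nonempty} : Finset ι) ∪ ({i | v ∈ R i} : Finset ι)) := by
    simp only [coverage, inter_insert_nonempty_iff, filter_or]
  rw [hins, hins]
  exact card_union_add_card_le_of_subset <|
    monotone_filter_right _ fun _ _ hi => hi.mono (inter_subset_inter_left h)

end Coverage

section Greedy

variable {V : Type*} [DecidableEq V] {f : Finset V → ℕ}

theorem greedy_gain_antitone
    (hf : ∀ ⦃A B : Finset V⦄, A ⊆ B → ∀ v, f (insert v B) + f A ≤ f (insert v A) + f B)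
    {u : ℕ → V} {S : ℕ → Finset V} (hS : ∀ i, S (i + 1) = insert (u i) (S i)) {n : ℕ}
    (hgreedy : ∀ i < n, ∀ v, f (insert v (S i)) ≤ f (insert (u i) (S i)))
    {i j : ℕ} (hij : i ≤ j) (hjn : j < n) :
    f (S (j + 1)) + f (S i) ≤ f (S (i + 1)) + f (S j) := by
  induction j, hij using Nat.le_induction with
  | base => exact le_rfl
  | succ j hij ih =>
    have hsub := hf (hS j ▸ subset_insert (u j) (S j)) (u (j + 1))
    have hpick := hgreedy j (by omega) (u (j + 1))
    rw [← hS j] at hpick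
    rw [← hS (j + 1)] at hsub
    have := ih (by omega)
    omega

theorem greedy_le_add_mul
    (hf : ∀ ⦃A B : Finset V⦄, A ⊆ B → ∀ v, f (insert v B) + f A ≤ f (insert v A) + f B)
    {u : ℕ → V} {S : ℕ → Finset V} (hS : ∀ i, S (i + 1) = insert (u i) (S i)) {n : ℕ}
    (hgreedy : ∀ i < n, ∀ v, f (insert v (S i)) ≤ f (insert (u i) (S i)))
    {p : ℕ} {T : ℝ} (hgain : (f (S (p + 1)) : ℝ) ≤ f (S p) + T) {k : ℕ} (hpk : p ≤ k)
    (hkn : k ≤ n) : (f (S k) : ℝ) ≤ f (S p) + (k - p) * T := by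
  induction k, hpk using Nat.le_induction with
  | base => simp
  | succ k hpk ih =>
    have hstep : (f (S (k + 1)) : ℝ) + f (S p) ≤ f (S (p + 1)) + f (S k) := by
      exact_mod_cast greedy_gain_antitone hf hS hgreedy hpk (by omega)
    have := ih (by omega)
    push_cast
    linarith

theorem insert_le_add_of_filtered_greedy
    (hf : ∀ ⦃A B : Finset V⦄, A ⊆ B → ∀ v, f (insert v B) + f A ≤ f (insert v A) + f B)
    (hf0 : f ∅ = 0) {X : Finset V} {w : V} {T : ℝ}
    (hw : ∀ v, T < f {v} → f (insert v X) ≤ f (insert w X))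
    (hgain : (f (insert w X) : ℝ) ≤ f X + T) (v : V) : (f (insert v X) : ℝ) ≤ f X + T := by
  by_cases hv : T < f {v}
  · exact le_trans (by exact_mod_cast hw v hv) hgain
  · have : f (insert v X) ≤ f X + f {v} := by simpa [hf0, add_comm] using hf (empty_subset X) v
    push Not at hv
    calc (f (insert v X) : ℝ) ≤ f X + f {v} := by exact_mod_cast this
      _ ≤ f X + T := by linarith

theorem greedy_le_add_mul_of_filtered_stall
    (hf : ∀ ⦃A B : Finset V⦄, A ⊆ B → ∀ v, f (insert v B) + f A ≤ f (insert v A) + f B)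
    (hf0 : f ∅ = 0) {u : ℕ → V} {S : ℕ → Finset V} (hS : ∀ i, S (i + 1) = insert (u i) (S i))
    {k : ℕ} (hgreedy : ∀ i < k, ∀ v, f (insert v (S i)) ≤ f (insert (u i) (S i)))
    {p : ℕ} (hpk : p ≤ k) {X : Finset V} (hX : S p = X) {w : V} {T : ℝ}
    (hw : ∀ v, T < f {v} → f (insert v X) ≤ f (insert w X))
    (hstall : (f (insert w X) : ℝ) ≤ f X + T) : (f (S k) : ℝ) ≤ f X + (k - p) * T := by
  subst hX
  exact greedy_le_add_mul hf hS hgreedy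
    (hS p ▸ insert_le_add_of_filtered_greedy hf hf0 hw hstall (u p)) hpk le_rfl

end Greedy

theorem image_range_add_one {α : Type*} [DecidableEq α] (u : ℕ → α) (i : ℕ) :
    (range (i + 1)).image u = insert (u i) ((range i).image u) := by
  rw [range_add_one, image_insert]

theorem monotone_image_range {α : Type*} [DecidableEq α] (u : ℕ → α) :
    Monotone fun i => (range i).image u := fun _ _ h => image_subset_image (range_mono h)

theorem stmt9_general {V : Type*} [Fintype V] [DecidableEq V] [Nonempty V]
    (M : ℕ) (R : Fin M → Finset V)
    (D : Finset V → ℕ)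
    (hD : ∀ S, D S = (Finset.univ.filter fun i : Fin M => (R i ∩ S).Nonempty).card)
    (Dstar : ℕ) (hDstar : (Dstar : ℤ) = Finset.univ.sup' Finset.univ_nonempty (fun v : V => (D {v} : ℤ)))
    (hDstar2 : 2 ≤ Dstar)
    (k : ℕ) (hk : 1 ≤ k)
    (T : ℝ) (hT : T = min ((Dstar : ℝ) / ((k : ℝ) - 1)) ((Dstar : ℝ) - 1))
    (u u' : ℕ → V)
    (S S' : ℕ → Finset V)
    (hS : ∀ i, S i = (Finset.range i).image u)
    (hS' : ∀ i, S' i = (Finset.range i).image u')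
    (hgreedy : ∀ i < k, ∀ v : V, D (insert v (S i)) ≤ D (insert (u i) (S i)))
    (hU : ∀ i < k, (D {u' i} : ℝ) > T)
    (hgreedy' : ∀ i < k, ∀ v : V, (D {v} : ℝ) > T →
      D (insert v (S' i)) ≤ D (insert (u' i) (S' i)))
    (q : ℕ) (hq1 : 1 ≤ q)
    (hqsmall : q ≤ k → (D (S' q) : ℝ) - D (S' (q - 1)) ≤ T)
    (hcoin : ∀ i, i + 1 < q → u i = u' i) :
    (D (S' k) : ℝ) ≥ (1 / 2) * (D (S k) : ℝ) := by
  obtain rfl : D = coverage R := funext hD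
  have hSsucc i : S (i + 1) = insert (u i) (S i) := by rw [hS, hS, image_range_add_one]
  have hS'succ i : S' (i + 1) = insert (u' i) (S' i) := by rw [hS', hS', image_range_add_one]
  have hS'0 : S' 0 = ∅ := by simp [hS']
  have hS'mono {i j : ℕ} (h : i ≤ j) : coverage R (S' i) ≤ coverage R (S' j) :=
    coverage_mono R <| by simpa only [hS'] using monotone_image_range u' h
  have hagree {i} (hi : i < q) : S i = S' i := by
    rw [hS, hS']; exact image_congr fun x hx => hcoin x (by simp at hx; omega)
  have hT0 : 0 ≤ T := hT ▸ le_min (div_nonneg (by positivity) (by simpa using hk)) (by simp; omega)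
  have hTk : ((k : ℝ) - 1) * T ≤ Dstar := hT ▸ mul_min_div_le (by positivity) (by simpa using hk)
  have hstar : Dstar ≤ coverage R (S' 1) := by
    obtain ⟨v, -, hv⟩ := exists_mem_eq_sup' univ_nonempty fun v : V => (coverage R {v} : ℤ)
    have hv : Dstar = coverage R {v} := by exact_mod_cast hDstar.trans hv
    have hTv : T < coverage R {v} := by rw [← hv, hT]; exact min_lt_of_right_lt (by linarith)
    simpa [hS'succ 0, hS'0, ← hv] using hgreedy' 0 hk v hTv
  have hstark : (Dstar : ℝ) ≤ coverage R (S' k) := by exact_mod_cast hstar.trans (hS'mono hk)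
  by_cases hqk : q ≤ k
  · obtain ⟨p, rfl⟩ : ∃ p, q = p + 1 := ⟨q - 1, by omega⟩
    have hstall := hqsmall hqk
    rw [Nat.add_sub_cancel, hS'succ] at hstall
    have hp : 1 ≤ p := by
      by_contra! hp0
      rw [Nat.lt_one_iff.1 hp0, hS'0, insert_empty, coverage_empty, Nat.cast_zero] at hstall
      linarith [hU 0 hk]
    have hSk := greedy_le_add_mul_of_filtered_stall (coverage_insert_add_le R) (coverage_empty R)
      hSsucc hgreedy (by omega) (hagree (by omega)) (hgreedy' p (by omega)) (by linarith)
    have hSp : (coverage R (S' p) : ℝ) ≤ coverage R (S' k) := by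
      exact_mod_cast hS'mono (by omega : p ≤ k)
    have : ((k : ℝ) - p) * T ≤ ((k : ℝ) - 1) * T := by gcongr; exact_mod_cast hp
    linarith
  · rw [hagree (by omega)]
    linarith [(Nat.cast_nonneg _ : (0 : ℝ) ≤ coverage R (S' k))]

/-- Filtered greedy with threshold `T = min{D*/(k−1), D*−1}` where
`D* = max_v D({v}) ≥ 2`: the filtered greedy set `S'_k` satisfies
`D(S'_k) ≥ (1/2)·D(S_k)`. -/
theorem stmt9 {V : Type*} [Fintype V] [DecidableEq V] [Nonempty V]
    (M : ℕ) (R : Fin M → Finset V)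
    (D : Finset V → ℕ)
    (hD : ∀ S, D S = (Finset.univ.filter fun i : Fin M => (R i ∩ S).Nonempty).card)
    (Dstar : ℕ) (hDstar : (Dstar : ℤ) = Finset.univ.sup' Finset.univ_nonempty (fun v : V => (D {v} : ℤ)))
    (hDstar2 : 2 ≤ Dstar)
    (k : ℕ) (hk : 1 ≤ k)
    (T : ℝ) (hT : T = min ((Dstar : ℝ) / ((k : ℝ) - 1)) ((Dstar : ℝ) - 1))
    (u u' : ℕ → V)
    (S S' : ℕ → Finset V)
    (hS : ∀ i, S i = (Finset.range i).image u)
    (hS' : ∀ i, S' i = (Finset.range i).image u')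
    (hgreedy : ∀ i < k, ∀ v : V, D (insert v (S i)) ≤ D (insert (u i) (S i)))
    (hU : ∀ i < k, (D {u' i} : ℝ) > T)
    (hgreedy' : ∀ i < k, ∀ v : V, (D {v} : ℝ) > T →
      D (insert v (S' i)) ≤ D (insert (u' i) (S' i)))
    (q : ℕ) (hq1 : 1 ≤ q) (hq2 : q ≤ k + 1)
    (hqbig : ∀ j, 1 ≤ j → j < q → T < (D (S' j) : ℝ) - D (S' (j - 1)))
    (hqsmall : q ≤ k → (D (S' q) : ℝ) - D (S' (q - 1)) ≤ T)
    (hcoin : ∀ i, i + 1 < q → u i = u' i) :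
    (D (S' k) : ℝ) ≥ (1 / 2) * (D (S k) : ℝ) :=
  stmt9_general M R D hD Dstar hDstar hDstar2 k hk T hT u u' S S' hS hS' hgreedy hU hgreedy' q hq1
    hqsmall hcoin
end

section
/- For a monotone submodular set function D : 2^V → ℝ≥0 with D(∅) = 0 and any k ≥ 1, the greedy algorithm that iteratively adds the element with maximum marginal gain produces a set S_k of size k with D(S_k) ≥ (1 − 1/e)·max_{|S|=k} D(S). -/
/-!
By monotonicity and submodularity, `D T ≤ D (S_i ∪ T)` exceeds `D S_i` by at most the sum over
`v ∈ T` of the marginal gains at `S_i`, each of which is at most the greedy gain. So every greedy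
step closes at least a `1/k` fraction of the gap `D T - D S_i`, and after `k` steps the gap is at
most `(1 - 1/k)^k · D T ≤ D T / e`.
-/

open Finset

section Submodular

variable {V : Type*} [DecidableEq V] {D : Finset V → ℝ}

theorem le_add_sum_marginal_gain
    (hsub : ∀ A B : Finset V, A ⊆ B → ∀ v : V, v ∉ B →
      D (insert v B) - D B ≤ D (insert v A) - D A)
    (A T : Finset V) :
    D (A ∪ T) ≤ D A + ∑ v ∈ T, (D (insert v A) - D A) := by
  induction T using Finset.induction_on with
  | empty => simp
  | @insert x T hxT ih =>
    rw [sum_insert hxT, union_insert]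
    by_cases hxA : x ∈ A
    · rw [insert_eq_of_mem (mem_union_left T hxA), insert_eq_of_mem hxA]
      linarith
    · have := hsub A (A ∪ T) subset_union_left x (by simp [hxA, hxT])
      linarith

theorem sub_le_card_mul_greedy_gain (hmono : Monotone D)
    (hsub : ∀ A B : Finset V, A ⊆ B → ∀ v : V, v ∉ B →
      D (insert v B) - D B ≤ D (insert v A) - D A)
    {A : Finset V} {u : V} (hu : ∀ v, D (insert v A) ≤ D (insert u A)) (T : Finset V) :
    D T - D A ≤ #T * (D (insert u A) - D A) := by
  calc D T - D A ≤ D (A ∪ T) - D A := by gcongr; exact hmono subset_union_right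
    _ ≤ ∑ v ∈ T, (D (insert v A) - D A) := by linarith [le_add_sum_marginal_gain hsub A T]
    _ ≤ #T • (D (insert u A) - D A) := sum_le_card_nsmul _ _ _ fun v _ ↦ by linarith [hu v]
    _ = #T * (D (insert u A) - D A) := nsmul_eq_mul _ _

theorem sub_greedy_le_one_sub_inv_card_mul (hmono : Monotone D)
    (hsub : ∀ A B : Finset V, A ⊆ B → ∀ v : V, v ∉ B →
      D (insert v B) - D B ≤ D (insert v A) - D A)
    {A : Finset V} {u : V} (hu : ∀ v, D (insert v A) ≤ D (insert u A))
    {T : Finset V} (hT : 0 < #T) :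
    D T - D (insert u A) ≤ (1 - 1 / #T) * (D T - D A) := by
  have hT' : (0 : ℝ) < #T := by exact_mod_cast hT
  have hgain : (D T - D A) / #T ≤ D (insert u A) - D A := by
    rw [div_le_iff₀ hT']
    linarith [sub_le_card_mul_greedy_gain hmono hsub hu T]
  have : (1 - 1 / (#T : ℝ)) * (D T - D A) = D T - D A - (D T - D A) / #T := by ring
  linarith

end Submodular

theorem stmt10_general {V : Type*} [DecidableEq V]
    (D : Finset V → ℝ)
    (hempty : D ∅ = 0)
    (hmono : ∀ A B : Finset V, A ⊆ B → D A ≤ D B)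
    (hsub : ∀ A B : Finset V, A ⊆ B → ∀ v : V, v ∉ B →
      D (insert v B) - D B ≤ D (insert v A) - D A)
    (k : ℕ) (hk : 1 ≤ k)
    (u : ℕ → V)
    (S : ℕ → Finset V) (hS : ∀ i, S i = (Finset.range i).image u)
    (hgreedy : ∀ i < k, ∀ v : V, D (insert v (S i)) ≤ D (insert (u i) (S i))) :
    ∀ Sopt : Finset V, Sopt.card = k →
      D (S k) ≥ (1 - 1 / Real.exp 1) * D Sopt := by
  intro Sopt hcard
  have hk' : (1 : ℝ) ≤ k := by exact_mod_cast hk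
  have hstep : ∀ i < k, D Sopt - D (S (i + 1)) ≤ (1 - 1 / k) * (D Sopt - D (S i)) := by
    intro i hi
    rw [hS (i + 1), range_add_one, image_insert, ← hS, ← hcard]
    exact sub_greedy_le_one_sub_inv_card_mul (fun A B ↦ hmono A B) hsub (hgreedy i hi)
      (by omega)
  have hgap := le_geom (u := fun i ↦ D Sopt - D (S i))
    (sub_nonneg.2 (div_le_one_of_le₀ hk' (by positivity))) k hstep
  have hS0 : S 0 = ∅ := by simp [hS]
  have hpow : (1 - 1 / k : ℝ) ^ k ≤ 1 / Real.exp 1 := by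
    simpa [Real.exp_neg] using Real.one_sub_div_pow_le_exp_neg (t := 1) hk'
  have hopt : 0 ≤ D Sopt := hempty ▸ hmono ∅ Sopt (empty_subset _)
  simp only [hS0, hempty, sub_zero] at hgap
  linarith [mul_le_mul_of_nonneg_right hpow hopt]

/-- Nemhauser–Wolsey–Fisher: for a monotone submodular `D : 2^V → ℝ≥0` with `D(∅) = 0`,
the greedy algorithm produces a `k`-set `S_k` with `D(S_k) ≥ (1 − 1/e)·max_{|S|=k} D(S)`. -/
theorem stmt10 {V : Type*} [Fintype V] [DecidableEq V]
    (D : Finset V → ℝ)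
    (hnonneg : ∀ S, 0 ≤ D S)
    (hempty : D ∅ = 0)
    (hmono : ∀ A B : Finset V, A ⊆ B → D A ≤ D B)
    (hsub : ∀ A B : Finset V, A ⊆ B → ∀ v : V, v ∉ B →
      D (insert v B) - D B ≤ D (insert v A) - D A)
    (k : ℕ) (hk : 1 ≤ k) (hkV : k ≤ Fintype.card V)
    (u : ℕ → V)
    (S : ℕ → Finset V) (hS : ∀ i, S i = (Finset.range i).image u)
    (hdistinct : ∀ i < k, u i ∉ S i)
    (hgreedy : ∀ i < k, ∀ v : V, D (insert v (S i)) ≤ D (insert (u i) (S i))) :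
    ∀ Sopt : Finset V, Sopt.card = k →
      D (S k) ≥ (1 - 1 / Real.exp 1) * D Sopt :=
  stmt10_general D hempty hmono hsub k hk u S hS hgreedy
end

section
/- Suppose M₂ i.i.d. RR sets are drawn and for a fixed vertex v with influence I_v ≥ I^k, the indicator variables xᵢ (xᵢ = 1 iff v ∈ Rᵢ) are i.i.d. Bernoulli with mean I_v/n. If M₂ ≥ n⌈Υ₁(ε, δ/n)⌉/((1+ε)I^k), then Pr[ (n/M₂)·Σᵢ xᵢ < (1−ε)I^k ] ≤ δ/(2n), where Υ₁(ε,δ/n) = 1 + (1+ε)·4(e−2)ln(2n/δ)/ε². -/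
/-!
With `p = I_v / n`, the event says that the Bernoulli sum `S = Σ xᵢ` falls below
`(1 - ξ) M₂ p` for `ξ = 1 - (1 - ε) I^k / I_v ≥ ε`. The multiplicative Chernoff bound
(exponential Markov at `t = log (1 - ξ)`, together with `u log u - u + 1 ≥ (1 - u)² / 2` on
`(0, 1]`) bounds its probability by `exp (-ξ² M₂ p / 2)`, and the sample size `M₂` is chosen
exactly so that `ξ² M₂ p / 2 ≥ ε² M₂ I^k / (2n) ≥ log (2n / δ)`.
-/

open MeasureTheory ProbabilityTheory Real Finset InformationTheory

lemma one_sub_sq_div_two_le_klFun {u : ℝ} (hu0 : 0 < u) (hu1 : u ≤ 1) :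
    (1 - u) ^ 2 / 2 ≤ klFun u := by
  have hsinh : (u - u⁻¹) / 2 ≤ log u := by
    rw [← sinh_log hu0]
    exact sinh_le_self_iff.2 (log_nonpos hu0.le hu1)
  have hmul : (u ^ 2 - 1) / 2 ≤ u * log u := by
    have := mul_le_mul_of_nonneg_left hsinh hu0.le
    rwa [mul_div_assoc', mul_sub, mul_inv_cancel₀ hu0.ne', ← sq] at this
  rw [klFun_apply]
  nlinarith

section Bernoulli

variable {Ω : Type*} [MeasurableSpace Ω] {P : Measure Ω} [IsProbabilityMeasure P]

lemma mgf_of_bernoulli {X : Ω → ℝ} (hX : Measurable X) (hval : ∀ ω, X ω = 0 ∨ X ω = 1)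
    {p : ℝ} (hp : 0 ≤ p) (hprob : P {ω | X ω = 1} = ENNReal.ofReal p) (t : ℝ) :
    mgf X P t = 1 + (exp t - 1) * p := by
  have hs : MeasurableSet {ω | X ω = 1} := hX (measurableSet_singleton 1)
  have hX_eq : X = {ω | X ω = 1}.indicator 1 := by
    funext ω
    rcases hval ω with h | h <;> simp [h]
  have hX_int : Integrable X P := by
    rw [hX_eq]
    exact (integrable_const 1).indicator hs
  have hX_mean : P[X] = p := by
    rw [hX_eq, integral_indicator_one hs, measureReal_def, hprob, ENNReal.toReal_ofReal hp]
  have hexp : (fun ω => exp (t * X ω)) = fun ω => 1 + (exp t - 1) * X ω := by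
    funext ω
    rcases hval ω with h | h <;> simp [h]
  rw [mgf, hexp, integral_add (integrable_const 1) (hX_int.const_mul _), integral_const,
    integral_const_mul, hX_mean]
  simp

variable {ι : Type*} {x : ι → Ω → ℝ} {p : ℝ}

lemma mgf_sum_of_bernoulli_le (hmeas : ∀ i, Measurable (x i))
    (hval : ∀ i ω, x i ω = 0 ∨ x i ω = 1) (hindep : iIndepFun x P) (hp : 0 ≤ p)
    (hprob : ∀ i, P {ω | x i ω = 1} = ENNReal.ofReal p) (s : Finset ι) (t : ℝ) :
    mgf (∑ i ∈ s, x i) P t ≤ exp (#s * ((exp t - 1) * p)) :=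
  calc mgf (∑ i ∈ s, x i) P t = ∏ i ∈ s, mgf (x i) P t := hindep.mgf_sum hmeas s
    _ ≤ ∏ _i ∈ s, exp ((exp t - 1) * p) := by
      refine prod_le_prod (fun _ _ => mgf_nonneg) fun i _ => ?_
      rw [mgf_of_bernoulli (hmeas i) (hval i) hp (hprob i)]
      linarith [add_one_le_exp ((exp t - 1) * p)]
    _ = exp (#s * ((exp t - 1) * p)) := by rw [prod_const, ← exp_nat_mul]

theorem measureReal_sum_le_le_exp_of_bernoulli (hmeas : ∀ i, Measurable (x i))
    (hval : ∀ i ω, x i ω = 0 ∨ x i ω = 1) (hindep : iIndepFun x P) (hp : 0 ≤ p)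
    (hprob : ∀ i, P {ω | x i ω = 1} = ENNReal.ofReal p) (s : Finset ι)
    {ξ : ℝ} (hξ0 : 0 ≤ ξ) (hξ1 : ξ < 1) :
    P.real {ω | ∑ i ∈ s, x i ω ≤ (1 - ξ) * #s * p} ≤ exp (-(ξ ^ 2 * #s * p / 2)) := by
  set u := 1 - ξ
  have hu0 : 0 < u := by linarith
  have hint : Integrable (fun ω => exp (log u * (∑ i ∈ s, x i) ω)) P :=
    hindep.integrable_exp_mul_sum hmeas fun i _ =>
      integrable_exp_mul_of_mem_Icc (a := 0) (b := 1) (hmeas i).aemeasurable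
        (ae_of_all _ fun ω => by rcases hval i ω with h | h <;> simp [h])
  have hchernoff := measure_le_le_exp_mul_mgf (u * #s * p)
    (log_nonpos hu0.le (by linarith)) hint
  simp only [Finset.sum_apply] at hchernoff
  -- at `t = log u` the Chernoff exponent is exactly `-#s p · klFun u`
  calc P.real {ω | ∑ i ∈ s, x i ω ≤ u * #s * p}
      ≤ exp (-log u * (u * #s * p)) * mgf (∑ i ∈ s, x i) P (log u) := hchernoff
    _ ≤ exp (-log u * (u * #s * p)) * exp (#s * ((exp (log u) - 1) * p)) := by
      gcongr
      exact mgf_sum_of_bernoulli_le hmeas hval hindep hp hprob s _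
    _ = exp (-(#s * p * klFun u)) := by
      rw [← exp_add, exp_log hu0, klFun_apply]
      ring_nf
    _ ≤ exp (-(ξ ^ 2 * #s * p / 2)) := by
      have hklFun := one_sub_sq_div_two_le_klFun hu0 (by linarith)
      have hsp : 0 ≤ (#s : ℝ) * p := by positivity
      rw [exp_le_exp, neg_le_neg_iff]
      nlinarith [mul_le_mul_of_nonneg_left hklFun hsp]

theorem measure_scaled_sum_lt_le_exp_of_bernoulli {n ε Ik Iv : ℝ} (hn : 0 < n) (hε0 : 0 < ε)
    (hε1 : ε < 1) (hIk : 0 < Ik) (hIv : Ik ≤ Iv) (hmeas : ∀ i, Measurable (x i))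
    (hval : ∀ i ω, x i ω = 0 ∨ x i ω = 1) (hindep : iIndepFun x P)
    (hprob : ∀ i, P {ω | x i ω = 1} = ENNReal.ofReal (Iv / n)) {s : Finset ι} (hs : s.Nonempty) :
    P {ω | n / #s * ∑ i ∈ s, x i ω < (1 - ε) * Ik}
      ≤ ENNReal.ofReal (exp (-(ε ^ 2 * #s * Ik / (2 * n)))) := by
  have hIv0 : 0 < Iv := hIk.trans_le hIv
  have hs0 : (0 : ℝ) < #s := by exact_mod_cast hs.card_pos
  set ξ := 1 - (1 - ε) * Ik / Iv
  have hεξ : ε ≤ ξ := by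
    have : (1 - ε) * Ik / Iv ≤ 1 - ε := div_le_of_le_mul₀ hIv0.le (by linarith) (by nlinarith)
    linarith
  have hξ1 : ξ < 1 := by
    have : 0 < 1 - ε := by linarith
    have : 0 < (1 - ε) * Ik / Iv := by positivity
    linarith
  have hevent : {ω | n / #s * ∑ i ∈ s, x i ω < (1 - ε) * Ik}
      ⊆ {ω | ∑ i ∈ s, x i ω ≤ (1 - ξ) * #s * (Iv / n)} := by
    intro ω hω
    have hthreshold : (1 - ξ) * #s * (Iv / n) = (1 - ε) * Ik * #s / n := by
      simp only [ξ]
      field_simp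
      ring
    simp only [Set.mem_ofPred_eq, hthreshold] at hω ⊢
    rw [div_mul_eq_mul_div, div_lt_iff₀ hs0] at hω
    rw [le_div_iff₀ hn]
    linarith
  have hexponent : ε ^ 2 * #s * Ik / (2 * n) ≤ ξ ^ 2 * #s * (Iv / n) / 2 := by
    have : ε ^ 2 * Ik ≤ ξ ^ 2 * Iv := by gcongr
    rw [mul_div_assoc', div_div, mul_right_comm _ (#s : ℝ), mul_right_comm _ (#s : ℝ),
      mul_comm n 2]
    gcongr
  calc P {ω | n / #s * ∑ i ∈ s, x i ω < (1 - ε) * Ik}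
      ≤ P {ω | ∑ i ∈ s, x i ω ≤ (1 - ξ) * #s * (Iv / n)} := measure_mono hevent
    _ = ENNReal.ofReal (P.real {ω | ∑ i ∈ s, x i ω ≤ (1 - ξ) * #s * (Iv / n)}) :=
      (ofReal_measureReal).symm
    _ ≤ ENNReal.ofReal (exp (-(ε ^ 2 * #s * Ik / (2 * n)))) := by
      gcongr
      refine (measureReal_sum_le_le_exp_of_bernoulli hmeas hval hindep (by positivity) hprob
        s (hε0.le.trans hεξ) hξ1).trans ?_
      gcongr

end Bernoulli

lemma le_sq_mul_div_of_eq_upsilon {ε L Υ : ℝ} (hε : 0 < ε) (hL : 0 ≤ L)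
    (hΥ : Υ = 1 + (1 + ε) * (4 * (exp 1 - 2) * L / ε ^ 2)) :
    L ≤ ε ^ 2 * Υ / (2 * (1 + ε)) := by
  have he : 5 / 2 ≤ exp 1 := by linarith [exp_one_gt_d9]
  have hsplit : ε ^ 2 * Υ / (2 * (1 + ε)) = ε ^ 2 / (2 * (1 + ε)) + 2 * (exp 1 - 2) * L := by
    rw [hΥ]
    field_simp
    ring
  rw [hsplit]
  have : 0 ≤ ε ^ 2 / (2 * (1 + ε)) := by positivity
  nlinarith

lemma le_sq_mul_div_of_sample_size {n ε L Υ Ik M : ℝ} (hn : 0 < n) (hε : 0 < ε) (hIk : 0 < Ik)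
    (hL : 0 ≤ L) (hΥ : Υ = 1 + (1 + ε) * (4 * (exp 1 - 2) * L / ε ^ 2))
    (hM : M ≥ n * ⌈Υ⌉ / ((1 + ε) * Ik)) :
    L ≤ ε ^ 2 * M * Ik / (2 * n) :=
  calc L ≤ ε ^ 2 * Υ / (2 * (1 + ε)) := le_sq_mul_div_of_eq_upsilon hε hL hΥ
    _ ≤ ε ^ 2 * ⌈Υ⌉ / (2 * (1 + ε)) := by gcongr; exact Int.le_ceil Υ
    _ = ε ^ 2 * (n * ⌈Υ⌉ / ((1 + ε) * Ik)) * Ik / (2 * n) := by field_simp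
    _ ≤ ε ^ 2 * M * Ik / (2 * n) := by gcongr

theorem stmt13_general
    {Ω : Type*} [MeasurableSpace Ω] (P : Measure Ω) [IsProbabilityMeasure P]
    (n : ℕ) (hn : 1 ≤ n)
    (δ : ℝ) (hδ0 : 0 < δ) (hδ : δ ≤ 1 / 4)
    (ε : ℝ) (hε0 : 0 < ε) (hε : ε ≤ 1 / 3)
    (Υ₁ : ℝ)
    (hΥ : Υ₁ = 1 + (1 + ε) * (4 * (Real.exp 1 - 2) * Real.log (2 * n / δ) / ε ^ 2))
    (Ik Iv : ℝ) (hIk : 0 < Ik) (hIv : Iv ≥ Ik)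
    (M₂ : ℕ) (hM₂ : (M₂ : ℝ) ≥ n * (⌈Υ₁⌉ : ℝ) / ((1 + ε) * Ik))
    (x : ℕ → Ω → ℝ) (hmeas : ∀ i, Measurable (x i))
    (hval : ∀ i ω, x i ω = 0 ∨ x i ω = 1)
    (hindep : iIndepFun x P)
    (hident : ∀ i, P {ω | x i ω = 1} = ENNReal.ofReal (Iv / n)) :
    P {ω | (n : ℝ) / M₂ * (∑ i ∈ Finset.range M₂, x i ω) < (1 - ε) * Ik}
      ≤ ENNReal.ofReal (δ / (2 * n)) := by
  have hn0 : (0 : ℝ) < n := by exact_mod_cast hn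
  have hL : 0 < log (2 * n / δ) := by
    refine log_pos ?_
    rw [lt_div_iff₀ hδ0]
    linarith [(Nat.one_le_cast (α := ℝ)).2 hn]
  have hLM := le_sq_mul_div_of_sample_size hn0 hε0 hIk hL.le hΥ hM₂
  have hM₂0 : (range M₂).Nonempty := nonempty_range_iff.2 fun h => by
    simp only [h, CharP.cast_eq_zero, mul_zero, zero_mul, zero_div] at hLM
    linarith
  calc P {ω | (n : ℝ) / M₂ * (∑ i ∈ range M₂, x i ω) < (1 - ε) * Ik}
      ≤ ENNReal.ofReal (exp (-(ε ^ 2 * M₂ * Ik / (2 * n)))) := by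
        simpa only [card_range] using measure_scaled_sum_lt_le_exp_of_bernoulli hn0 hε0
          (by linarith) hIk hIv hmeas hval hindep hident hM₂0
    _ ≤ ENNReal.ofReal (exp (-log (2 * n / δ))) := by gcongr
    _ = ENNReal.ofReal (δ / (2 * n)) := by rw [exp_neg, exp_log (by positivity), inv_div]

/-- If `M₂` i.i.d. indicator variables `xᵢ` (membership of a fixed vertex `v` in the `i`-th
RR set) have mean `I_v/n` with `I_v ≥ I^k`, and
`M₂ ≥ n⌈Υ₁(ε, δ/n)⌉/((1+ε)I^k)`, then
`Pr[(n/M₂)·Σ xᵢ < (1−ε)I^k] ≤ δ/(2n)`. -/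
theorem stmt13
    {Ω : Type*} [MeasurableSpace Ω] (P : Measure Ω) [IsProbabilityMeasure P]
    (n : ℕ) (hn : 1 ≤ n)
    (δ : ℝ) (hδ0 : 0 < δ) (hδ : δ ≤ 1 / 4)
    (ε : ℝ) (hε0 : 0 < ε) (hε : ε ≤ 1 / 3)
    (Υ₁ : ℝ)
    (hΥ : Υ₁ = 1 + (1 + ε) * (4 * (Real.exp 1 - 2) * Real.log (2 * n / δ) / ε ^ 2))
    (Ik Iv : ℝ) (hIk : 0 < Ik) (hIv : Iv ≥ Ik) (hIvn : Iv ≤ n)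
    (M₂ : ℕ) (hM₂ : (M₂ : ℝ) ≥ n * (⌈Υ₁⌉ : ℝ) / ((1 + ε) * Ik))
    (x : ℕ → Ω → ℝ) (hmeas : ∀ i, Measurable (x i))
    (hval : ∀ i ω, x i ω = 0 ∨ x i ω = 1)
    (hindep : iIndepFun x P)
    (hident : ∀ i, P {ω | x i ω = 1} = ENNReal.ofReal (Iv / n)) :
    P {ω | (n : ℝ) / M₂ * (∑ i ∈ Finset.range M₂, x i ω) < (1 - ε) * Ik}
      ≤ ENNReal.ofReal (δ / (2 * n)) :=
  stmt13_general P n hn δ hδ0 hδ ε hε0 hε Υ₁ hΥ Ik Iv hIk hIv M₂ hM₂ x hmeas hval hindep hident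
end

section
/- Suppose the following three events hold simultaneously: (1) D₁ᵏ/((1+ε)M₁) ≤ Iᵏ/n ≤ (D₁ᵏ+1)/((1−ε)M₁); (2) every vertex v with I_v ≥ Iᵏ satisfies D₂(v)/M₂ ≥ (1−ε)·Iᵏ/n; (3) every vertex v with I_v ≤ (1−2ε)·Iᵏ satisfies D₂(v)/M₂ ≤ I_v/n + ε·Iᵏ/n. Let T = ((1−ε)/(1+ε))·D₁ᵏ and M₂ = M₁. Then the set S = {v : D₂(v) ≥ T} contains every vertex with I_v ≥ Iᵏ, and every v ∈ S satisfies I_v ≥ n·T/M₂ − ε·Iᵏ. -/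
/-!
Event (1) bounds the threshold by `T / M ≤ (1 - ε) Iᵏ / n`, and with (2) this gives recall.
For precision, a vertex of `S` either has `I_v > (1 - 2ε) Iᵏ ≥ n T / M - ε Iᵏ`, or falls under
(3), whence `n T / M ≤ n D₂(v) / M ≤ I_v + ε Iᵏ`.
-/

theorem one_sub_div_one_add_mul_div_le {ε d I n M : ℝ} (hε : ε ≤ 1)
    (h : d / ((1 + ε) * M) ≤ I / n) :
    (1 - ε) / (1 + ε) * d / M ≤ (1 - ε) * I / n := by
  calc (1 - ε) / (1 + ε) * d / M = (1 - ε) * (d / ((1 + ε) * M)) := by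
        rw [div_mul_eq_mul_div, div_div, mul_div_assoc]
    _ ≤ (1 - ε) * (I / n) := mul_le_mul_of_nonneg_left h (by linarith)
    _ = (1 - ε) * I / n := (mul_div_assoc _ _ _).symm

theorem mul_div_le_of_div_le_div {T M b n : ℝ} (hn : 0 < n) (h : T / M ≤ b / n) :
    n * T / M ≤ b := by
  rw [mul_div_assoc]
  exact (le_div_iff₀' hn).1 h

theorem stmt16_general {V : Type*}
    (n : ℕ) (hn : 1 ≤ n)
    (Iv : V → ℝ)
    (Ik : ℝ)
    (ε : ℝ) (hε : ε ≤ 1 / 3)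
    (D₁k : ℕ) (D₂ : V → ℕ) (M₁ M₂ : ℕ) (hM₁ : 0 < M₁) (hM : M₂ = M₁)
    (h1 : (D₁k : ℝ) / ((1 + ε) * M₁) ≤ Ik / n ∧ Ik / n ≤ ((D₁k : ℝ) + 1) / ((1 - ε) * M₁))
    (h2 : ∀ v, Iv v ≥ Ik → (D₂ v : ℝ) / M₂ ≥ (1 - ε) * Ik / n)
    (h3 : ∀ v, Iv v ≤ (1 - 2 * ε) * Ik → (D₂ v : ℝ) / M₂ ≤ Iv v / n + ε * Ik / n)
    (T : ℝ) (hT : T = ((1 - ε) / (1 + ε)) * D₁k)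
    (S : Finset V) (hS : ∀ v, v ∈ S ↔ (D₂ v : ℝ) ≥ T) :
    (∀ v, Iv v ≥ Ik → v ∈ S) ∧
    (∀ v ∈ S, Iv v ≥ n * T / M₂ - ε * Ik) := by
  subst hM
  have hn : (0 : ℝ) < n := by exact_mod_cast hn
  have hM : (0 : ℝ) < M₂ := by exact_mod_cast hM₁
  have hTM : T / M₂ ≤ (1 - ε) * Ik / n := hT ▸ one_sub_div_one_add_mul_div_le (by linarith) h1.1
  refine ⟨fun v hv => (hS v).2 ((div_le_div_iff_of_pos_right hM).1 (hTM.trans (h2 v hv))),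
    fun v hv => ?_⟩
  have hTv : T / M₂ ≤ D₂ v / M₂ := div_le_div_of_nonneg_right ((hS v).1 hv) hM.le
  by_cases hc : Iv v ≤ (1 - 2 * ε) * Ik
  · have h3v := h3 v hc
    rw [← add_div] at h3v
    linarith [mul_div_le_of_div_le_div hn (hTv.trans h3v)]
  · linarith [mul_div_le_of_div_le_div hn hTM]

/-- Deterministic top-k guarantee: under events (1)–(3), with `T = ((1−ε)/(1+ε))·D₁ᵏ` and
`M₂ = M₁`, the returned set `S = {v : D₂(v) ≥ T}` contains every vertex with `I_v ≥ Iᵏ`,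
and every `v ∈ S` has `I_v ≥ n·T/M₂ − ε·Iᵏ`. -/
theorem stmt16 {V : Type*} [Fintype V]
    (n : ℕ) (hn : 1 ≤ n)
    (Iv : V → ℝ) (hIv : ∀ v, 0 ≤ Iv v)
    (Ik : ℝ) (hIk : 0 < Ik)
    (ε : ℝ) (hε0 : 0 < ε) (hε : ε ≤ 1 / 3)
    (D₁k : ℕ) (D₂ : V → ℕ) (M₁ M₂ : ℕ) (hM₁ : 0 < M₁) (hM : M₂ = M₁)
    (h1 : (D₁k : ℝ) / ((1 + ε) * M₁) ≤ Ik / n ∧ Ik / n ≤ ((D₁k : ℝ) + 1) / ((1 - ε) * M₁))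
    (h2 : ∀ v, Iv v ≥ Ik → (D₂ v : ℝ) / M₂ ≥ (1 - ε) * Ik / n)
    (h3 : ∀ v, Iv v ≤ (1 - 2 * ε) * Ik → (D₂ v : ℝ) / M₂ ≤ Iv v / n + ε * Ik / n)
    (T : ℝ) (hT : T = ((1 - ε) / (1 + ε)) * D₁k)
    (S : Finset V) (hS : ∀ v, v ∈ S ↔ (D₂ v : ℝ) ≥ T) :
    (∀ v, Iv v ≥ Ik → v ∈ S) ∧
    (∀ v ∈ S, Iv v ≥ n * T / M₂ - ε * Ik) :=
  stmt16_general n hn Iv Ik ε hε D₁k D₂ M₁ M₂ hM₁ hM h1 h2 h3 T hT S hS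
end

section
/- Suppose that for every k-set S, |D₂(S)/M₂ − I(S)/n| ≤ ε·I(S*_k)/n, and that the greedy output S_k satisfies D₂(S_k) ≥ (1−1/e)·max_{|S|=k} D₂(S). If moreover both failure events (the deviation event and the event I* < nD₁*/M₁) each have probability at most δ/3 and 2δ/3 respectively, then Pr[I(S_k) ≥ (1 − 1/e − (2 − 1/e)ε)·I(S*_k)] ≥ 1 − δ. -/
open MeasureTheory

/-!
On the event that the sample degrees approximate the influence of every `k`-set to within
`ε·I(S*_k)/n`, the `(1 - 1/e)`-guarantee of greedy for the sample degrees transfers to the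
influence, at the cost of one error term for `S_k` and one (scaled by `1 - 1/e`) for `S*_k`.
Hence the bad event is contained in the deviation failure event, whose probability is at
most `δ/3 ≤ δ`.
-/

lemma le_of_abs_sub_le_of_mul_le {a η x y x' y' : ℝ} (ha : 0 ≤ a)
    (hx : |x' - x| ≤ η) (hy : |y' - y| ≤ η) (h : a * y' ≤ x') :
    a * y - (1 + a) * η ≤ x := by
  have hy' : a * y ≤ a * y' + a * η := by
    rw [← mul_add]
    exact mul_le_mul_of_nonneg_left (by linarith [(abs_le.mp hy).1]) ha
  linarith [(abs_le.mp hx).2]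

lemma mul_le_of_abs_sub_div_le {ι : Type*} {f g : ι → ℝ} {a ε n : ℝ} {s t : ι}
    (hn : 0 < n) (ha : 0 ≤ a) (hs : |f s - g s / n| ≤ ε * g t / n)
    (ht : |f t - g t / n| ≤ ε * g t / n) (h : a * f t ≤ f s) :
    (a - (1 + a) * ε) * g t ≤ g s := by
  have hdiv := le_of_abs_sub_le_of_mul_le ha hs ht h
  rw [← div_le_div_iff_of_pos_right hn]
  linarith [show (a - (1 + a) * ε) * g t / n = a * (g t / n) - (1 + a) * (ε * g t / n) by ring]

lemma ofReal_one_sub_le_measure_of_imp {Ω : Type*} [MeasurableSpace Ω] (P : Measure Ω)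
    [IsProbabilityMeasure P] {p q : Ω → Prop} {r : ℝ} (hr : 0 ≤ r) (hpq : ∀ ω, p ω → q ω)
    (hp : P {ω | ¬ p ω} ≤ ENNReal.ofReal r) :
    ENNReal.ofReal (1 - r) ≤ P {ω | q ω} := by
  have hcompl : P {ω | q ω}ᶜ ≤ ENNReal.ofReal r :=
    (measure_mono fun ω (hω : ¬ q ω) hp' => hω (hpq ω hp')).trans hp
  have hunion : 1 ≤ P {ω | q ω} + P {ω | q ω}ᶜ := by
    simpa only [Set.union_compl_self, measure_univ] using
      measure_union_le (μ := P) {ω | q ω} {ω | q ω}ᶜ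
  rw [ENNReal.ofReal_sub _ hr, ENNReal.ofReal_one, tsub_le_iff_right]
  exact hunion.trans (add_le_add_right hcompl _)

theorem stmt19_general {V : Type*}
    {Ω : Type*} [MeasurableSpace Ω] (P : Measure Ω) [IsProbabilityMeasure P]
    (n : ℕ) (hn : 1 ≤ n)
    (I : Finset V → ℝ)
    (ε δ : ℝ) (hδ : δ ∈ Set.Ioo (0:ℝ) 1)
    (k : ℕ)
    (Sstar : Finset V) (hSstar : Sstar.card = k)
    (M₂ : ℕ)
    (D₂ : Ω → Finset V → ℕ)            -- random RR-set degrees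
    (Sk : Ω → Finset V)                -- greedy output
    (hSk : ∀ ω, (Sk ω).card = k)
    -- greedy guarantee (holds deterministically, by submodularity of the degree function)
    (hgreedy : ∀ ω, ∀ S : Finset V, S.card = k →
      (D₂ ω (Sk ω) : ℝ) ≥ (1 - 1 / Real.exp 1) * D₂ ω S)
    -- deviation failure event has probability at most δ/3
    (hdev : P {ω | ¬ ∀ S : Finset V, S.card = k →
        |(D₂ ω S : ℝ) / M₂ - I S / n| ≤ ε * I Sstar / n} ≤ ENNReal.ofReal (δ / 3)) :
    P {ω | I (Sk ω) ≥ (1 - 1 / Real.exp 1 - (2 - 1 / Real.exp 1) * ε) * I Sstar}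
      ≥ ENNReal.ofReal (1 - δ) := by
  have hn : (0 : ℝ) < n := by exact_mod_cast hn
  have he : 0 ≤ 1 - 1 / Real.exp 1 := by
    rw [sub_nonneg, div_le_one (Real.exp_pos 1)]
    exact Real.one_le_exp zero_le_one
  have hgood : ∀ ω, (∀ S : Finset V, S.card = k →
      |(D₂ ω S : ℝ) / M₂ - I S / n| ≤ ε * I Sstar / n) →
      I (Sk ω) ≥ (1 - 1 / Real.exp 1 - (2 - 1 / Real.exp 1) * ε) * I Sstar := by
    intro ω hdev'
    have hsample : (1 - 1 / Real.exp 1) * ((D₂ ω Sstar : ℝ) / M₂) ≤ (D₂ ω (Sk ω) : ℝ) / M₂ := by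
      rw [← mul_div_assoc]
      exact div_le_div_of_nonneg_right (hgreedy ω Sstar hSstar) M₂.cast_nonneg
    have := mul_le_of_abs_sub_div_le (f := fun S => (D₂ ω S : ℝ) / M₂) hn he
      (hdev' _ (hSk ω)) (hdev' _ hSstar) hsample
    linarith
  calc ENNReal.ofReal (1 - δ) ≤ ENNReal.ofReal (1 - δ / 3) :=
        ENNReal.ofReal_le_ofReal (by linarith [hδ.1])
    _ ≤ _ := ofReal_one_sub_le_measure_of_imp P (by linarith [hδ.1]) hgood hdev

/-- Union-bound guarantee for influence maximization: if on the good deviation event every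
`k`-set `S` satisfies `|D₂(S)/M₂ − I(S)/n| ≤ ε·I(S*_k)/n`, the greedy output always
satisfies `D₂(S_k) ≥ (1−1/e)·max_{|S|=k} D₂(S)`, and the two failure events (deviation
failure, and `I* < nD₁*/M₁`) have probabilities at most `δ/3` and `2δ/3` respectively,
then `Pr[I(S_k) ≥ (1 − 1/e − (2 − 1/e)ε)·I(S*_k)] ≥ 1 − δ`. -/
theorem stmt19 {V : Type*} [Fintype V] [DecidableEq V]
    {Ω : Type*} [MeasurableSpace Ω] (P : Measure Ω) [IsProbabilityMeasure P]
    (n : ℕ) (hn : 1 ≤ n)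
    (I : Finset V → ℝ) (hI : ∀ S, 0 ≤ I S)
    (ε δ : ℝ) (hε : ε ∈ Set.Ioo (0:ℝ) 1) (hδ : δ ∈ Set.Ioo (0:ℝ) 1)
    (k : ℕ) (hk : 1 ≤ k)
    (Sstar : Finset V) (hSstar : Sstar.card = k)
    (hmax : ∀ S : Finset V, S.card = k → I S ≤ I Sstar)
    (M₁ M₂ : ℕ) (hM₂ : 0 < M₂)
    (D₂ : Ω → Finset V → ℕ)            -- random RR-set degrees
    (Sk : Ω → Finset V)                -- greedy output
    (hSk : ∀ ω, (Sk ω).card = k)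
    -- greedy guarantee (holds deterministically, by submodularity of the degree function)
    (hgreedy : ∀ ω, ∀ S : Finset V, S.card = k →
      (D₂ ω (Sk ω) : ℝ) ≥ (1 - 1 / Real.exp 1) * D₂ ω S)
    -- deviation failure event has probability at most δ/3
    (hdev : P {ω | ¬ ∀ S : Finset V, S.card = k →
        |(D₂ ω S : ℝ) / M₂ - I S / n| ≤ ε * I Sstar / n} ≤ ENNReal.ofReal (δ / 3))
    -- the failure event I* < n·D₁*/M₁ has probability at most 2δ/3
    (Istar : ℝ) (D₁star : ℕ) (M₁' : Ω → ℕ)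
    (hIstar : P {ω | Istar < n * (D₁star : ℝ) / (M₁' ω : ℝ)} ≤ ENNReal.ofReal (2 * δ / 3)) :
    P {ω | I (Sk ω) ≥ (1 - 1 / Real.exp 1 - (2 - 1 / Real.exp 1) * ε) * I Sstar}
      ≥ ENNReal.ofReal (1 - δ) :=
  stmt19_general P n hn I ε δ hδ k Sstar hSstar M₂ D₂ Sk hSk hgreedy hdev
end
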